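/- arXiv:2511.01089 — 10 statements merged into one kernel-verified Lean document; each statement's English description precedes it below -/
import Mathlib

section
/- Let f : ℝⁿ → ℝ ∪ {+∞} be a proper convex function that is symmetric (f(x) = f(Px) for every n×n permutation matrix P), let K_f be the associated spectral vector cone and K_F the associated spectral matrix cone. Let (t̄, v̄, X̄) ∈ ℝ × ℝ × Sⁿ and let X̄ = U diag(λ̄) Uᵀ be an eigenvalue decomposition of X̄ with U orthogonal and λ̄ ∈ ℝⁿ. Write Π_{K_f}(t̄, v̄, λ̄) = (t*, v*, λ*). Then the Euclidean projection of (t̄, v̄, X̄) onto K_F is Π_{K_F}(t̄, v̄, X̄) = (t*, v*, U diag(λ*) Uᵀ). -/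
open Matrix Finset

/-- The entries of `x` sorted in nonincreasing order. -/
noncomputable def sortDesc {n : ℕ} (x : Fin n → ℝ) : Fin n → ℝ :=
  fun i => (x ∘ Tuple.sort x) i.rev

open Classical in
/-- The eigenvalues of a real symmetric matrix in nonincreasing order
(junk value `0` if the matrix is not symmetric). -/
noncomputable def eigsDesc {n : ℕ} (X : Matrix (Fin n) (Fin n) ℝ) : Fin n → ℝ :=
  if h : X.IsHermitian then sortDesc h.eigenvalues else 0

/-- The spectral vector cone `K_f` associated with the proper convex function with
value `f` on its domain `S` (and `+∞` outside `S`):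
`K_f = cl {(t, v, x) | v > 0, v * f(x / v) ≤ t}`. -/
def vecCone {n : ℕ} (S : Set (Fin n → ℝ)) (f : (Fin n → ℝ) → ℝ) :
    Set (ℝ × ℝ × (Fin n → ℝ)) :=
  closure {p | 0 < p.2.1 ∧ p.2.1⁻¹ • p.2.2 ∈ S ∧ p.2.1 * f (p.2.1⁻¹ • p.2.2) ≤ p.1}

/-- The spectral matrix cone `K_F`, where `F X = f (λ(X))` with `λ(X)` the eigenvalues
of the symmetric matrix `X` in nonincreasing order:
`K_F = cl {(t, v, X) | X symmetric, v > 0, v * F(X / v) ≤ t}`. -/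
noncomputable def matCone {n : ℕ} (S : Set (Fin n → ℝ)) (f : (Fin n → ℝ) → ℝ) :
    Set (ℝ × ℝ × Matrix (Fin n) (Fin n) ℝ) :=
  closure {p | p.2.2.IsHermitian ∧ 0 < p.2.1 ∧ p.2.1⁻¹ • eigsDesc p.2.2 ∈ S ∧
    p.2.1 * f (p.2.1⁻¹ • eigsDesc p.2.2) ≤ p.1}

/-! If `X = U diag(x) Uᵀ` with `U` orthogonal, the eigenvalues of `X` are a rearrangement
of `x`, so the permutation invariance of `f` lets conjugation by `U` carry `K_f` into `K_F`,
without changing distances between such matrices. Conversely, by the Hoffman–Wielandt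
inequality `‖λ(Y) - λ(X)‖ ≤ ‖Y - X‖_F`, every point `(t, v, Y)` of `K_F` is at least as far
from `(t̄, v̄, X̄)` as the point of `K_f` formed by the eigenvalues of `Y`, rearranged in the
order of `λ̄`, is from `(t̄, v̄, λ̄)`.

Hoffman–Wielandt: with `Q = VᵀW`, `‖V diag(d) Vᵀ - W diag(e) Wᵀ‖² = ∑ Q_ij² (d_i - e_j)²`,
and `(Q_ij²)` is doubly stochastic, so by Birkhoff's theorem the right side is a convex
combination of sums `∑ (d_i - e_σ(i))²`, each bounded below by the sorted sum by the
rearrangement inequality. -/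

variable {n : ℕ}

theorem antitone_sortDesc (x : Fin n → ℝ) : Antitone (sortDesc x) :=
  fun _ _ hij => Tuple.monotone_sort x (Fin.rev_le_rev.mpr hij)

theorem exists_sortDesc_eq_comp (x : Fin n → ℝ) :
    ∃ σ : Equiv.Perm (Fin n), sortDesc x = x ∘ σ :=
  ⟨Fin.revPerm.trans (Tuple.sort x), rfl⟩

theorem exists_eq_sortDesc_comp (x : Fin n → ℝ) :
    ∃ σ : Equiv.Perm (Fin n), x = sortDesc x ∘ σ := by
  obtain ⟨σ, hσ⟩ := exists_sortDesc_eq_comp x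
  exact ⟨σ.symm, by rw [hσ]; ext; simp⟩

theorem sortDesc_eq_of_map_univ_eq {x y : Fin n → ℝ}
    (h : univ.val.map x = univ.val.map y) : sortDesc x = sortDesc y := by
  have hperm (z : Fin n → ℝ) : (List.ofFn (sortDesc z)).Perm (List.ofFn z) :=
    Equiv.Perm.ofFn_comp_perm (Fin.revPerm.trans (Tuple.sort z)) z
  refine List.ofFn_injective <| List.Perm.eq_of_sortedGE (antitone_sortDesc x).sortedGE_ofFn
    (antitone_sortDesc y).sortedGE_ofFn <| (hperm x).trans <| .trans ?_ (hperm y).symm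
  simpa using h

theorem isHermitian_conj_diagonal (U : Matrix (Fin n) (Fin n) ℝ) (x : Fin n → ℝ) :
    (U * diagonal x * Uᵀ).IsHermitian := by
  simpa [conjTranspose_eq_transpose_of_trivial] using
    isHermitian_mul_mul_conjTranspose U (isHermitian_diagonal x)

open Polynomial in
theorem map_univ_eigenvalues_conj_diagonal {U : Matrix (Fin n) (Fin n) ℝ}
    (hU : U ∈ orthogonalGroup (Fin n) ℝ) (x : Fin n → ℝ) :
    univ.val.map (isHermitian_conj_diagonal U x).eigenvalues = univ.val.map x := by
  have hchar : (U * diagonal x * Uᵀ).charpoly = ∏ i, (X - C (x i)) := by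
    rw [charpoly_mul_comm, ← Matrix.mul_assoc, (mem_orthogonalGroup_iff' _ _).mp hU,
      Matrix.one_mul, charpoly_diagonal]
  have := (isHermitian_conj_diagonal U x).roots_charpoly_eq_eigenvalues
  rw [hchar, roots_prod _ _ (by simp [prod_ne_zero_iff, X_sub_C_ne_zero])] at this
  simpa using this.symm

theorem eigsDesc_conj_diagonal {U : Matrix (Fin n) (Fin n) ℝ}
    (hU : U ∈ orthogonalGroup (Fin n) ℝ) (x : Fin n → ℝ) :
    eigsDesc (U * diagonal x * Uᵀ) = sortDesc x := by
  rw [eigsDesc, dif_pos (isHermitian_conj_diagonal U x)]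
  exact sortDesc_eq_of_map_univ_eq (map_univ_eigenvalues_conj_diagonal hU x)

theorem Matrix.IsHermitian.exists_eq_conj_diagonal {Y : Matrix (Fin n) (Fin n) ℝ}
    (hY : Y.IsHermitian) :
    ∃ V ∈ orthogonalGroup (Fin n) ℝ, ∃ d : Fin n → ℝ, Y = V * diagonal d * Vᵀ := by
  refine ⟨hY.eigenvectorUnitary, hY.eigenvectorUnitary.2, hY.eigenvalues, ?_⟩
  conv_lhs => rw [hY.spectral_theorem]
  simp [Unitary.conjStarAlgAut_apply, star_eq_conjTranspose, conjTranspose_eq_transpose_of_trivial]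

theorem sum_sub_sq_eq {ι : Type*} [Fintype ι] (x y : ι → ℝ) :
    ∑ i, (x i - y i) ^ 2 = ∑ i, x i ^ 2 - 2 * ∑ i, x i * y i + ∑ i, y i ^ 2 := by
  simp only [sub_sq, sum_add_distrib, sum_sub_distrib, mul_sum, mul_assoc]

theorem Monovary.sum_sub_sq_le_sum_sub_comp_perm_sq {ι : Type*} [Fintype ι] {x y : ι → ℝ}
    (hxy : Monovary x y) (σ : Equiv.Perm ι) :
    ∑ i, (x i - y i) ^ 2 ≤ ∑ i, (x i - y (σ i)) ^ 2 := by
  rw [sum_sub_sq_eq, sum_sub_sq_eq, Equiv.sum_comp σ (fun i => y i ^ 2)]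
  linarith [hxy.sum_mul_comp_perm_le_sum_mul (σ := σ)]

theorem sum_sortDesc_sub_sq_le_sum_sub_comp_perm_sq (x y : Fin n → ℝ)
    (σ : Equiv.Perm (Fin n)) :
    ∑ i, (sortDesc x i - sortDesc y i) ^ 2 ≤ ∑ i, (x i - y (σ i)) ^ 2 := by
  obtain ⟨τx, hx⟩ := exists_eq_sortDesc_comp x
  obtain ⟨τy, hy⟩ := exists_eq_sortDesc_comp y
  have hmono : Monovary (sortDesc x) (sortDesc y) :=
    (antitone_sortDesc x).monovary (antitone_sortDesc y)
  calc ∑ i, (sortDesc x i - sortDesc y i) ^ 2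
      ≤ ∑ i, (sortDesc x (τx i) - sortDesc y ((τx.symm.trans (σ.trans τy)) (τx i))) ^ 2 :=
        (hmono.sum_sub_sq_le_sum_sub_comp_perm_sq _).trans_eq (Equiv.sum_comp τx _).symm
    _ = ∑ i, (x i - y (σ i)) ^ 2 := by
        conv_rhs => rw [hx, hy]
        simp

theorem sum_permMatrix_mul {ι : Type*} [Fintype ι] [DecidableEq ι] (σ : Equiv.Perm ι)
    (g : ι → ι → ℝ) : ∑ i, ∑ j, σ.permMatrix ℝ i j * g i j = ∑ i, g i (σ i) := by
  simp [Equiv.Perm.permMatrix, PEquiv.toMatrix_apply]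

theorem sum_sortDesc_sub_sq_le_of_mem_doublyStochastic (x y : Fin n → ℝ)
    {D : Matrix (Fin n) (Fin n) ℝ} (hD : D ∈ doublyStochastic ℝ (Fin n)) :
    ∑ i, (sortDesc x i - sortDesc y i) ^ 2 ≤ ∑ i, ∑ j, D i j * (x i - y j) ^ 2 := by
  have hlin : IsLinearMap ℝ
      fun D : Matrix (Fin n) (Fin n) ℝ => ∑ i, ∑ j, D i j * (x i - y j) ^ 2 :=
    ⟨fun A B => by simp [add_mul, sum_add_distrib], fun c A => by simp [mul_sum, mul_assoc]⟩
  rw [← SetLike.mem_coe, doublyStochastic_eq_convexHull_permMatrix] at hD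
  refine convexHull_min ?_ (convex_halfSpace_ge hlin _) hD
  rintro _ ⟨σ, rfl⟩
  simpa [sum_permMatrix_mul] using sum_sortDesc_sub_sq_le_sum_sub_comp_perm_sq x y σ

section Orthogonal

variable {ι : Type*} [Fintype ι]

theorem sum_sq_eq_trace_mul_transpose (M : Matrix ι ι ℝ) :
    ∑ i, ∑ j, M i j ^ 2 = trace (M * Mᵀ) := by
  simp [trace, mul_apply, sq]

variable [DecidableEq ι]

theorem sum_sq_mul_mul_transpose {V W : Matrix ι ι ℝ} (hV : V ∈ orthogonalGroup ι ℝ)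
    (hW : W ∈ orthogonalGroup ι ℝ) (M : Matrix ι ι ℝ) :
    ∑ i, ∑ j, (V * M * Wᵀ) i j ^ 2 = ∑ i, ∑ j, M i j ^ 2 := by
  rw [sum_sq_eq_trace_mul_transpose, sum_sq_eq_trace_mul_transpose]
  calc trace (V * M * Wᵀ * (V * M * Wᵀ)ᵀ) = trace (V * (M * Mᵀ) * Vᵀ) := by
        simp only [transpose_mul, transpose_transpose, Matrix.mul_assoc]
        rw [← Matrix.mul_assoc Wᵀ W, (mem_orthogonalGroup_iff' _ _).mp hW, Matrix.one_mul]
    _ = trace (M * Mᵀ) := by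
        rw [trace_mul_comm, ← Matrix.mul_assoc, (mem_orthogonalGroup_iff' _ _).mp hV,
          Matrix.one_mul]

theorem conj_diagonal_sub_conj_diagonal {V W : Matrix ι ι ℝ} (hV : V ∈ orthogonalGroup ι ℝ)
    (hW : W ∈ orthogonalGroup ι ℝ) (d e : ι → ℝ) :
    V * diagonal d * Vᵀ - W * diagonal e * Wᵀ =
      V * (diagonal d * (Vᵀ * W) - (Vᵀ * W) * diagonal e) * Wᵀ := by
  rw [Matrix.mul_sub, Matrix.sub_mul]
  simp only [Matrix.mul_assoc, (mem_orthogonalGroup_iff _ _).mp hW, Matrix.mul_one]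
  rw [← Matrix.mul_assoc V Vᵀ, (mem_orthogonalGroup_iff _ _).mp hV, Matrix.one_mul]

theorem sum_sq_conj_diagonal_sub_conj_diagonal {V W : Matrix ι ι ℝ}
    (hV : V ∈ orthogonalGroup ι ℝ) (hW : W ∈ orthogonalGroup ι ℝ) (d e : ι → ℝ) :
    ∑ i, ∑ j, ((V * diagonal d * Vᵀ) i j - (W * diagonal e * Wᵀ) i j) ^ 2 =
      ∑ i, ∑ j, (Vᵀ * W) i j ^ 2 * (d i - e j) ^ 2 := by
  simp_rw [← Matrix.sub_apply, conj_diagonal_sub_conj_diagonal hV hW,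
    sum_sq_mul_mul_transpose hV hW]
  refine sum_congr rfl fun i _ => sum_congr rfl fun j _ => ?_
  simp only [Matrix.sub_apply, diagonal_mul, mul_diagonal]
  ring

theorem sum_sq_conj_diagonal_sub_conj_diagonal_self {U : Matrix ι ι ℝ}
    (hU : U ∈ orthogonalGroup ι ℝ) (d e : ι → ℝ) :
    ∑ i, ∑ j, ((U * diagonal d * Uᵀ) i j - (U * diagonal e * Uᵀ) i j) ^ 2 =
      ∑ i, (d i - e i) ^ 2 := by
  simp [sum_sq_conj_diagonal_sub_conj_diagonal hU hU, (mem_orthogonalGroup_iff' _ _).mp hU,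
    one_apply]

theorem of_sq_mem_doublyStochastic {Q : Matrix ι ι ℝ} (hQ : Q ∈ orthogonalGroup ι ℝ) :
    of (fun i j => Q i j ^ 2) ∈ doublyStochastic ℝ ι := by
  rw [mem_doublyStochastic_iff_sum]
  refine ⟨fun i j => sq_nonneg _, fun i => ?_, fun j => ?_⟩
  · simpa [mul_apply, sq] using congr_fun₂ ((mem_orthogonalGroup_iff _ _).mp hQ) i i
  · simpa [mul_apply, sq] using congr_fun₂ ((mem_orthogonalGroup_iff' _ _).mp hQ) j j

end Orthogonal

theorem sum_sortDesc_sub_sq_le_sum_sq_conj_diagonal_sub {V W : Matrix (Fin n) (Fin n) ℝ}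
    (hV : V ∈ orthogonalGroup (Fin n) ℝ) (hW : W ∈ orthogonalGroup (Fin n) ℝ)
    (d e : Fin n → ℝ) :
    ∑ i, (sortDesc d i - sortDesc e i) ^ 2 ≤
      ∑ i, ∑ j, ((V * diagonal d * Vᵀ) i j - (W * diagonal e * Wᵀ) i j) ^ 2 := by
  rw [sum_sq_conj_diagonal_sub_conj_diagonal hV hW]
  simpa using sum_sortDesc_sub_sq_le_of_mem_doublyStochastic d e
    (of_sq_mem_doublyStochastic (mul_mem (transpose_mem_unitaryGroup_iff.mpr hV) hW))

theorem sum_eigsDesc_sub_sq_le {X Y : Matrix (Fin n) (Fin n) ℝ} (hX : X.IsHermitian)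
    (hY : Y.IsHermitian) :
    ∑ i, (eigsDesc X i - eigsDesc Y i) ^ 2 ≤ ∑ i, ∑ j, (X i j - Y i j) ^ 2 := by
  obtain ⟨V, hV, d, rfl⟩ := hX.exists_eq_conj_diagonal
  obtain ⟨W, hW, e, rfl⟩ := hY.exists_eq_conj_diagonal
  rw [eigsDesc_conj_diagonal hV, eigsDesc_conj_diagonal hW]
  exact sum_sortDesc_sub_sq_le_sum_sq_conj_diagonal_sub hV hW d e

section Cones

variable {S : Set (Fin n → ℝ)} {f : (Fin n → ℝ) → ℝ}

def vecConeCore (S : Set (Fin n → ℝ)) (f : (Fin n → ℝ) → ℝ) :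
    Set (ℝ × ℝ × (Fin n → ℝ)) :=
  {p | 0 < p.2.1 ∧ p.2.1⁻¹ • p.2.2 ∈ S ∧ p.2.1 * f (p.2.1⁻¹ • p.2.2) ≤ p.1}

def IsPermInvariant (S : Set (Fin n → ℝ)) (f : (Fin n → ℝ) → ℝ) : Prop :=
  ∀ (σ : Equiv.Perm (Fin n)) (x : Fin n → ℝ), x ∈ S → x ∘ σ ∈ S ∧ f (x ∘ σ) = f x

theorem matCone_eq_closure : matCone S f =
    closure {p | p.2.2.IsHermitian ∧ (p.1, p.2.1, eigsDesc p.2.2) ∈ vecConeCore S f} := rfl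

theorem comp_perm_mem_vecConeCore (hsymm : IsPermInvariant S f)
    {t v : ℝ} {x : Fin n → ℝ} (σ : Equiv.Perm (Fin n)) (h : (t, v, x) ∈ vecConeCore S f) :
    (t, v, x ∘ σ) ∈ vecConeCore S f := by
  obtain ⟨hv, hS, hf⟩ := h
  obtain ⟨hSσ, hfσ⟩ := hsymm σ _ hS
  exact ⟨hv, hSσ, by rwa [← hfσ] at hf⟩

theorem conj_diagonal_mem_matCone (hsymm : IsPermInvariant S f)
    {U : Matrix (Fin n) (Fin n) ℝ} (hU : U ∈ orthogonalGroup (Fin n) ℝ) {t v : ℝ}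
    {x : Fin n → ℝ} (h : (t, v, x) ∈ vecCone S f) :
    (t, v, U * diagonal x * Uᵀ) ∈ matCone S f := by
  let φ : ℝ × ℝ × (Fin n → ℝ) → ℝ × ℝ × Matrix (Fin n) (Fin n) ℝ :=
    fun p => (p.1, p.2.1, U * diagonal p.2.2 * Uᵀ)
  have hφ : Continuous φ := by fun_prop
  have hcore : Set.MapsTo φ (vecConeCore S f)
      {p | p.2.2.IsHermitian ∧ (p.1, p.2.1, eigsDesc p.2.2) ∈ vecConeCore S f} := by
    rintro ⟨t, v, x⟩ hx
    obtain ⟨σ, hσ⟩ := exists_sortDesc_eq_comp x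
    refine ⟨isHermitian_conj_diagonal U x, ?_⟩
    simp only [φ]
    rw [eigsDesc_conj_diagonal hU, hσ]
    exact comp_perm_mem_vecConeCore hsymm σ hx
  exact hcore.closure hφ h

theorem exists_mem_vecConeCore_sum_sub_sq_le (hsymm : IsPermInvariant S f)
    {U : Matrix (Fin n) (Fin n) ℝ} (hU : U ∈ orthogonalGroup (Fin n) ℝ) (lam : Fin n → ℝ)
    {t v : ℝ} {Y : Matrix (Fin n) (Fin n) ℝ} (hY : Y.IsHermitian)
    (h : (t, v, eigsDesc Y) ∈ vecConeCore S f) :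
    ∃ z, (t, v, z) ∈ vecConeCore S f ∧
      ∑ i, (z i - lam i) ^ 2 ≤ ∑ i, ∑ j, (Y i j - (U * diagonal lam * Uᵀ) i j) ^ 2 := by
  obtain ⟨σ, hσ⟩ := exists_eq_sortDesc_comp lam
  refine ⟨eigsDesc Y ∘ σ, comp_perm_mem_vecConeCore hsymm σ h, ?_⟩
  calc ∑ i, ((eigsDesc Y ∘ σ) i - lam i) ^ 2
      = ∑ i, (eigsDesc Y i - eigsDesc (U * diagonal lam * Uᵀ) i) ^ 2 := by
        rw [eigsDesc_conj_diagonal hU]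
        conv_lhs => rw [hσ]
        exact Equiv.sum_comp σ fun i => (eigsDesc Y i - sortDesc lam i) ^ 2
    _ ≤ _ := sum_eigsDesc_sub_sq_le hY (isHermitian_conj_diagonal U lam)

end Cones

theorem stmt0_general {n : ℕ} (S : Set (Fin n → ℝ)) (f : (Fin n → ℝ) → ℝ)
    (hsymm : ∀ (e : Equiv.Perm (Fin n)) (x : Fin n → ℝ), x ∈ S →
      (x ∘ ⇑e) ∈ S ∧ f (x ∘ ⇑e) = f x)
    (tb vb : ℝ) (Xb : Matrix (Fin n) (Fin n) ℝ)
    (U : Matrix (Fin n) (Fin n) ℝ) (hU : U * Uᵀ = 1)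
    (lam : Fin n → ℝ) (hdecomp : Xb = U * Matrix.diagonal lam * Uᵀ)
    (tstar vstar : ℝ) (lamstar : Fin n → ℝ)
    (hmem : (tstar, vstar, lamstar) ∈ vecCone S f)
    (hnearest : ∀ q ∈ vecCone S f,
      (tstar - tb) ^ 2 + (vstar - vb) ^ 2 + ∑ i, (lamstar i - lam i) ^ 2 ≤
      (q.1 - tb) ^ 2 + (q.2.1 - vb) ^ 2 + ∑ i, (q.2.2 i - lam i) ^ 2) :
    (tstar, vstar, U * Matrix.diagonal lamstar * Uᵀ) ∈ matCone S f ∧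
    ∀ q ∈ matCone S f,
      (tstar - tb) ^ 2 + (vstar - vb) ^ 2 +
        ∑ i, ∑ j, ((U * Matrix.diagonal lamstar * Uᵀ) i j - Xb i j) ^ 2 ≤
      (q.1 - tb) ^ 2 + (q.2.1 - vb) ^ 2 + ∑ i, ∑ j, (q.2.2 i j - Xb i j) ^ 2 := by
  have hUo : U ∈ orthogonalGroup (Fin n) ℝ := (mem_orthogonalGroup_iff _ _).mpr hU
  subst hdecomp
  refine ⟨conj_diagonal_mem_matCone hsymm hUo hmem, ?_⟩
  rw [sum_sq_conj_diagonal_sub_conj_diagonal_self hUo, matCone_eq_closure]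
  show closure _ ⊆ {q | (_ : ℝ) ≤ _}
  refine closure_minimal (fun p hp => ?_) (isClosed_le continuous_const ?_)
  · obtain ⟨z, hz, hzY⟩ := exists_mem_vecConeCore_sum_sub_sq_le hsymm hUo lam hp.1 hp.2
    exact (hnearest (p.1, p.2.1, z) (subset_closure hz)).trans (by dsimp only; linarith)
  · fun_prop

/-- If `f` is a proper convex symmetric function (value `f` on its
domain `S`, `+∞` outside), `Xb = U diag(λ̄) Uᵀ` is an eigenvalue decomposition of the
symmetric matrix `Xb`, and `(t*, v*, λ*)` is the Euclidean projection of `(tb, vb, λ̄)`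
onto the spectral vector cone `K_f`, then the Euclidean projection of `(tb, vb, Xb)`
onto the spectral matrix cone `K_F` is `(t*, v*, U diag(λ*) Uᵀ)`. -/
theorem stmt0 {n : ℕ} (S : Set (Fin n → ℝ)) (f : (Fin n → ℝ) → ℝ)
    (hproper : S.Nonempty) (hconv : ConvexOn ℝ S f)
    (hsymm : ∀ (e : Equiv.Perm (Fin n)) (x : Fin n → ℝ), x ∈ S →
      (x ∘ ⇑e) ∈ S ∧ f (x ∘ ⇑e) = f x)
    (tb vb : ℝ) (Xb : Matrix (Fin n) (Fin n) ℝ)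
    (U : Matrix (Fin n) (Fin n) ℝ) (hU : U * Uᵀ = 1) (hU' : Uᵀ * U = 1)
    (lam : Fin n → ℝ) (hdecomp : Xb = U * Matrix.diagonal lam * Uᵀ)
    (tstar vstar : ℝ) (lamstar : Fin n → ℝ)
    (hmem : (tstar, vstar, lamstar) ∈ vecCone S f)
    (hnearest : ∀ q ∈ vecCone S f,
      (tstar - tb) ^ 2 + (vstar - vb) ^ 2 + ∑ i, (lamstar i - lam i) ^ 2 ≤
      (q.1 - tb) ^ 2 + (q.2.1 - vb) ^ 2 + ∑ i, (q.2.2 i - lam i) ^ 2) :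
    (tstar, vstar, U * Matrix.diagonal lamstar * Uᵀ) ∈ matCone S f ∧
    ∀ q ∈ matCone S f,
      (tstar - tb) ^ 2 + (vstar - vb) ^ 2 +
        ∑ i, ∑ j, ((U * Matrix.diagonal lamstar * Uᵀ) i j - Xb i j) ^ 2 ≤
      (q.1 - tb) ^ 2 + (q.2.1 - vb) ^ 2 + ∑ i, ∑ j, (q.2.2 i j - Xb i j) ^ 2 :=
  stmt0_general S f hsymm tb vb Xb U hU lam hdecomp tstar vstar lamstar hmem hnearest
end

section
/- Define K⁰_log = {(t, v, x) ∈ ℝ × ℝ_{>0} × ℝ^n_{>0} : −∑_{i=1}^n v log(x_i/v) ≤ t}. Then the closure of K⁰_log in ℝ^{n+2} equals K⁰_log ∪ (ℝ_{≥0} × {0} × ℝ^n_{≥0}). -/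
/-!
On `v > 0` the defining inequality is equivalent to `vⁿ · exp (-t / v) ≤ ∏ xᵢ`, which is continuous
in `(t, v, x)` and forces every `xᵢ ≥ 0` to be positive; so limit points with `v > 0` stay in `K⁰_log`.
Since `log x ≤ x - 1`, the function `-∑ v log (xᵢ / v)` is bounded below by the continuous function
`∑ (v log v + v - v xᵢ)`, which vanishes at `v = 0`; so limit points with `v = 0` have `t ≥ 0`.
Conversely, for `t ≥ 0` and `x ≥ 0` the points `(t, ε, x + ε)` lie in `K⁰_log`, because every
`log ((xᵢ + ε) / ε)` is nonnegative.
-/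

open Finset Filter Topology Real

/-- `K⁰_log`, with points `(t, v, x)`. -/
def logCone₀ (ι : Type*) [Fintype ι] : Set (ℝ × ℝ × (ι → ℝ)) :=
  {p | 0 < p.2.1 ∧ (∀ i, 0 < p.2.2 i) ∧ -∑ i, p.2.1 * log (p.2.2 i / p.2.1) ≤ p.1}

variable {ι : Type*} [Fintype ι]

lemma neg_sum_mul_log_div_le_iff {t v : ℝ} {x : ι → ℝ} (hv : 0 < v) (hx : ∀ i, 0 < x i) :
    -∑ i, v * log (x i / v) ≤ t ↔ v ^ Fintype.card ι * exp (-t / v) ≤ ∏ i, x i := by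
  have hprod : 0 < ∏ i, x i / v := prod_pos fun i _ => div_pos (hx i) hv
  calc -∑ i, v * log (x i / v) ≤ t ↔ -t / v ≤ log (∏ i, x i / v) := by
        rw [← mul_sum, log_prod fun i _ => (div_pos (hx i) hv).ne', div_le_iff₀ hv]
        constructor <;> intro h <;> linarith
    _ ↔ exp (-t / v) ≤ ∏ i, x i / v := le_log_iff_exp_le hprod
    _ ↔ v ^ Fintype.card ι * exp (-t / v) ≤ ∏ i, x i := by
        rw [prod_div_distrib, prod_const, card_univ, le_div_iff₀ (by positivity), mul_comm]

lemma mul_log_add_sub_mul_le_neg_mul_log_div {v x : ℝ} (hv : 0 < v) (hx : 0 < x) :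
    v * log v + v - v * x ≤ -(v * log (x / v)) := by
  have := mul_le_mul_of_nonneg_left (log_le_sub_one_of_pos hx) hv.le
  rw [log_div hx.ne' hv.ne']
  linarith

lemma closure_logCone₀_subset :
    closure (logCone₀ ι) ⊆
      logCone₀ ι ∪ {p | 0 ≤ p.1 ∧ p.2.1 = 0 ∧ ∀ i, 0 ≤ p.2.2 i} := by
  intro p hp
  have hv : 0 ≤ p.2.1 :=
    ContinuousWithinAt.closure_le (f := fun _ => 0) (g := fun q => q.2.1) hp
      continuousWithinAt_const (by fun_prop) fun q hq => hq.1.le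
  have hx (i : ι) : 0 ≤ p.2.2 i :=
    ContinuousWithinAt.closure_le (f := fun _ => 0) (g := fun q => q.2.2 i) hp
      continuousWithinAt_const (by fun_prop) fun q hq => (hq.2.1 i).le
  rcases hv.eq_or_lt with hv | hv
  · have hlower : ∑ i, (p.2.1 * log p.2.1 + p.2.1 - p.2.1 * p.2.2 i) ≤ p.1 :=
      ContinuousWithinAt.closure_le (g := fun q => q.1) hp
        (Continuous.continuousWithinAt <| by
          have : Continuous fun q : ℝ × ℝ × (ι → ℝ) => q.2.1 * log q.2.1 :=
            continuous_mul_log.comp (by fun_prop)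
          fun_prop)
        (by fun_prop) fun q ⟨hqv, hqx, hq⟩ =>
          (sum_le_sum fun i _ => mul_log_add_sub_mul_le_neg_mul_log_div hqv (hqx i)).trans
            (by rwa [← sum_neg_distrib] at hq)
    rw [← hv] at hlower
    exact Or.inr ⟨by simpa using hlower, hv.symm, hx⟩
  · have hprod : p.2.1 ^ Fintype.card ι * exp (-p.1 / p.2.1) ≤ ∏ i, p.2.2 i :=
      ContinuousWithinAt.closure_le hp
        (ContinuousAt.continuousWithinAt <| by fun_prop (disch := exact hv.ne'))
        (by fun_prop) fun q ⟨hqv, hqx, hq⟩ => (neg_sum_mul_log_div_le_iff hqv hqx).1 hq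
    have hpos : 0 < ∏ i, p.2.2 i := hprod.trans_lt' (by positivity)
    have hxpos (i : ι) : 0 < p.2.2 i :=
      (hx i).lt_of_ne' fun hxi => hpos.ne' (prod_eq_zero (mem_univ i) hxi)
    exact Or.inl ⟨hv, hxpos, (neg_sum_mul_log_div_le_iff hv hxpos).2 hprod⟩

lemma subset_closure_logCone₀ :
    {p : ℝ × ℝ × (ι → ℝ) | 0 ≤ p.1 ∧ p.2.1 = 0 ∧ ∀ i, 0 ≤ p.2.2 i} ⊆ closure (logCone₀ ι) := by
  rintro ⟨t, v, x⟩ ⟨ht, rfl : v = 0, hx⟩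
  let path : ℝ → ℝ × ℝ × (ι → ℝ) := fun ε => (t, ε, fun i => x i + ε)
  have hpath : Tendsto path (𝓝[>] 0) (𝓝 (t, 0, x)) := by
    have : Continuous path := by fun_prop
    simpa [path] using (this.tendsto 0).mono_left nhdsWithin_le_nhds
  refine mem_closure_of_tendsto hpath (eventually_nhdsWithin_of_forall fun ε (hε : 0 < ε) => ?_)
  have hxε (i : ι) : 0 < x i + ε := by linarith [hx i]
  refine ⟨hε, hxε, ?_⟩
  have hlog (i : ι) : 0 ≤ ε * log ((x i + ε) / ε) :=
    mul_nonneg hε.le <| log_nonneg <| (one_le_div hε).2 (by linarith [hx i])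
  linarith [sum_nonneg fun i (_ : i ∈ univ) => hlog i]

/-- Let
`K⁰_log = {(t, v, x) ∈ ℝ × ℝ_{>0} × ℝⁿ_{>0} : −∑ᵢ v·log(xᵢ/v) ≤ t}`.
Its closure in `ℝ^{n+2}` equals `K⁰_log ∪ (ℝ_{≥0} × {0} × ℝⁿ_{≥0})`. -/
theorem stmt4 (n : ℕ) :
    closure {p : ℝ × ℝ × (Fin n → ℝ) |
        0 < p.2.1 ∧ (∀ i, 0 < p.2.2 i) ∧
          -∑ i, p.2.1 * Real.log (p.2.2 i / p.2.1) ≤ p.1} =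
    {p : ℝ × ℝ × (Fin n → ℝ) |
        0 < p.2.1 ∧ (∀ i, 0 < p.2.2 i) ∧
          -∑ i, p.2.1 * Real.log (p.2.2 i / p.2.1) ≤ p.1} ∪
    {p : ℝ × ℝ × (Fin n → ℝ) | 0 ≤ p.1 ∧ p.2.1 = 0 ∧ ∀ i, 0 ≤ p.2.2 i} :=
  subset_antisymm closure_logCone₀_subset
    (Set.union_subset subset_closure subset_closure_logCone₀)
end

section
/- Define K⁰_inv = {(t, v, x) ∈ ℝ × ℝ_{>0} × ℝ^n_{>0} : v² ∑_{i=1}^n 1/x_i ≤ t}. Then the closure of K⁰_inv in ℝ^{n+2} equals K⁰_inv ∪ (ℝ_{≥0} × {0} × ℝ^n_{≥0}). -/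
/-!
On `K⁰_inv` the inequality `v ^ 2 * ∑ i, (x i)⁻¹ ≤ t` implies the closed conditions
`t, v, x ≥ 0` and `v ^ 2 ≤ t * x i`, so these persist in the closure; when `v > 0` the last one
forces `x > 0`, where the defining inequality is continuous and passes to the limit.
Conversely `(t, 0, x)` with `t, x ≥ 0` is the limit as `ε → 0⁺` of `(t + n ε, ε, x + ε)`,
which lies in `K⁰_inv` because `ε ^ 2 * ∑ i, (x i + ε)⁻¹ ≤ n ε`.
-/

open Finset Filter Topology

/-- The set `K⁰_inv`. -/
def invConeCore (ι : Type*) [Fintype ι] : Set (ℝ × ℝ × (ι → ℝ)) :=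
  {p | 0 < p.2.1 ∧ (∀ i, 0 < p.2.2 i) ∧ p.2.1 ^ 2 * ∑ i, (p.2.2 i)⁻¹ ≤ p.1}

def invConeBoundary (ι : Type*) : Set (ℝ × ℝ × (ι → ℝ)) :=
  {p | 0 ≤ p.1 ∧ p.2.1 = 0 ∧ ∀ i, 0 ≤ p.2.2 i}

section

variable {ι : Type*} [Fintype ι]

lemma sq_le_mul_of_sq_mul_sum_inv_le {v t : ℝ} {x : ι → ℝ} (hx : ∀ i, 0 < x i)
    (h : v ^ 2 * ∑ i, (x i)⁻¹ ≤ t) (i : ι) : v ^ 2 ≤ t * x i := by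
  have hi : v ^ 2 * (x i)⁻¹ ≤ t :=
    (mul_le_mul_of_nonneg_left (single_le_sum (fun j _ ↦ (inv_pos.2 (hx j)).le) (mem_univ i))
      (sq_nonneg v)).trans h
  rwa [← div_eq_mul_inv, div_le_iff₀ (hx i)] at hi

lemma sq_mul_sum_inv_add_le {ε : ℝ} (hε : 0 < ε) {x : ι → ℝ} (hx : ∀ i, 0 ≤ x i) :
    ε ^ 2 * ∑ i, (x i + ε)⁻¹ ≤ Fintype.card ι * ε := by
  calc ε ^ 2 * ∑ i, (x i + ε)⁻¹ ≤ ε ^ 2 * ∑ _i : ι, ε⁻¹ := by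
        gcongr with i
        exact le_add_of_nonneg_left (hx i)
    _ = Fintype.card ι * ε := by
        rw [sum_const, card_univ, nsmul_eq_mul]
        field_simp

lemma closure_invConeCore_subset :
    closure (invConeCore ι) ⊆ invConeCore ι ∪ invConeBoundary ι := by
  intro p hp
  have closure_le {f g : ℝ × ℝ × (ι → ℝ) → ℝ} (hf : ContinuousAt f p) (hg : ContinuousAt g p)
      (h : ∀ q ∈ invConeCore ι, f q ≤ g q) : f p ≤ g p :=
    ContinuousWithinAt.closure_le hp hf.continuousWithinAt hg.continuousWithinAt h
  have hv : 0 ≤ p.2.1 := closure_le (by fun_prop) (by fun_prop) fun q hq ↦ hq.1.le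
  have hx i : 0 ≤ p.2.2 i := closure_le (by fun_prop) (by fun_prop) fun q hq ↦ (hq.2.1 i).le
  have ht : 0 ≤ p.1 := closure_le (by fun_prop) (by fun_prop) fun q hq ↦
    (mul_nonneg (sq_nonneg _) (sum_nonneg fun i _ ↦ inv_nonneg.2 (hq.2.1 i).le)).trans hq.2.2
  have hvx i : p.2.1 ^ 2 ≤ p.1 * p.2.2 i := closure_le (by fun_prop) (by fun_prop)
    fun q hq ↦ sq_le_mul_of_sq_mul_sum_inv_le hq.2.1 hq.2.2 i
  rcases hv.eq_or_lt with hv0 | hvpos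
  · exact Or.inr ⟨ht, hv0.symm, hx⟩
  have hxpos i : 0 < p.2.2 i := by
    refine (hx i).lt_of_ne fun hxi ↦ ?_
    have := hvx i
    rw [← hxi, mul_zero] at this
    exact this.not_gt (pow_pos hvpos 2)
  refine Or.inl ⟨hvpos, hxpos, closure_le ?_ (by fun_prop) fun q hq ↦ hq.2.2⟩
  fun_prop (disch := exact (hxpos _).ne')

lemma invConeBoundary_subset_closure : invConeBoundary ι ⊆ closure (invConeCore ι) := by
  rintro ⟨t, v, x⟩ ⟨ht, rfl : v = 0, hx⟩
  let γ : ℝ → ℝ × ℝ × (ι → ℝ) := fun ε ↦ (t + Fintype.card ι * ε, ε, fun i ↦ x i + ε)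
  have hγ : Tendsto γ (𝓝[>] 0) (𝓝 (t, 0, x)) :=
    ((show Continuous γ by fun_prop).tendsto' 0 _ (by simp [γ])).mono_left nhdsWithin_le_nhds
  refine mem_closure_of_tendsto hγ (eventually_nhdsWithin_of_forall fun ε (hε : 0 < ε) ↦ ?_)
  exact ⟨hε, fun i ↦ add_pos_of_nonneg_of_pos (hx i) hε,
    (sq_mul_sum_inv_add_le hε hx).trans (le_add_of_nonneg_left ht)⟩

theorem closure_invConeCore :
    closure (invConeCore ι) = invConeCore ι ∪ invConeBoundary ι :=
  closure_invConeCore_subset.antisymm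
    (Set.union_subset subset_closure invConeBoundary_subset_closure)

end

/-- Let
`K⁰_inv = {(t, v, x) ∈ ℝ × ℝ_{>0} × ℝⁿ_{>0} : v² ∑ᵢ 1/xᵢ ≤ t}`.
Its closure in `ℝ^{n+2}` equals `K⁰_inv ∪ (ℝ_{≥0} × {0} × ℝⁿ_{≥0})`. -/
theorem stmt5 (n : ℕ) :
    closure {p : ℝ × ℝ × (Fin n → ℝ) |
        0 < p.2.1 ∧ (∀ i, 0 < p.2.2 i) ∧ p.2.1 ^ 2 * ∑ i, (p.2.2 i)⁻¹ ≤ p.1} =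
    {p : ℝ × ℝ × (Fin n → ℝ) |
        0 < p.2.1 ∧ (∀ i, 0 < p.2.2 i) ∧ p.2.1 ^ 2 * ∑ i, (p.2.2 i)⁻¹ ≤ p.1} ∪
    {p : ℝ × ℝ × (Fin n → ℝ) | 0 ≤ p.1 ∧ p.2.1 = 0 ∧ ∀ i, 0 ≤ p.2.2 i} :=
  closure_invConeCore (ι := Fin n)
end

section
/- Define K⁰_vEnt = {(t, v, x) ∈ ℝ × ℝ_{>0} × ℝ^n_{≥0} : ∑_{i=1}^n x_i log(x_i/v) ≤ t}, with the convention 0·log(0/v) = 0. Then the closure of K⁰_vEnt in ℝ^{n+2} equals K⁰_vEnt ∪ (ℝ_{≥0} × ℝ_{≥0} × {0}ⁿ). -/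
/-!
By the Fenchel–Young inequality `y log y ≥ c y - exp (c - 1)`, every point of `K⁰_vEnt` satisfies
the affine inequalities `c ∑ᵢ xᵢ - n v exp (c - 1) ≤ t` for all `c : ℝ`; these define a closed set,
so they hold on the closure too, and at `v = 0` they force `t ≥ 0` and `∑ᵢ xᵢ = 0`, i.e. `x = 0`.
Where `v > 0` the perspective `∑ᵢ xᵢ log (xᵢ / v)` is continuous, so the defining inequality
passes to the limit. Conversely `(t, 0, 0)` with `t ≥ 0` is the limit of `(t, ε, 0) ∈ K⁰_vEnt`.
-/

open Real Set

theorem Real.mul_sub_exp_le_mul_log (c : ℝ) {y : ℝ} (hy : 0 ≤ y) :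
    c * y - exp (c - 1) ≤ y * log y := by
  rcases hy.eq_or_lt with rfl | hy
  · simp [(exp_pos _).le]
  · have h := add_one_le_exp (c - 1 - log y)
    rw [exp_sub, exp_log hy, le_div_iff₀ hy] at h
    nlinarith

theorem Real.mul_log_div_eq (x : ℝ) {v : ℝ} (hv : v ≠ 0) :
    x * log (x / v) = v * (x / v * log (x / v)) := by
  rw [← mul_assoc, mul_div_cancel₀ _ hv]

theorem Real.mul_sub_mul_exp_le_mul_log_div (c : ℝ) {x v : ℝ} (hx : 0 ≤ x) (hv : 0 < v) :
    c * x - v * exp (c - 1) ≤ x * log (x / v) := by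
  rw [mul_log_div_eq x hv.ne']
  calc c * x - v * exp (c - 1) = v * (c * (x / v) - exp (c - 1)) := by field_simp
    _ ≤ v * (x / v * log (x / v)) :=
      mul_le_mul_of_nonneg_left (mul_sub_exp_le_mul_log c (div_nonneg hx hv.le)) hv.le

theorem eq_zero_of_forall_mul_le {s t : ℝ} (h : ∀ c, c * s ≤ t) : s = 0 := by
  by_contra hs
  have := h ((t + 1) / s)
  rw [div_mul_cancel₀ _ hs] at this
  linarith

namespace VectorEntropyCone

variable {ι : Type*} [Fintype ι]

noncomputable def negEntropyPerspective (v : ℝ) (x : ι → ℝ) : ℝ :=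
  ∑ i, x i * log (x i / v)

/-- The set `K⁰_vEnt`; the convention `0 log (0 / v) = 0` is automatic since `Real.log 0 = 0`. -/
def epigraph (ι : Type*) [Fintype ι] : Set (ℝ × ℝ × (ι → ℝ)) :=
  {p | 0 < p.2.1 ∧ (∀ i, 0 ≤ p.2.2 i) ∧ negEntropyPerspective p.2.1 p.2.2 ≤ p.1}

theorem affine_le_negEntropyPerspective (c : ℝ) {v : ℝ} {x : ι → ℝ} (hx : ∀ i, 0 ≤ x i)
    (hv : 0 < v) :
    c * ∑ i, x i - Fintype.card ι * v * exp (c - 1) ≤ negEntropyPerspective v x := by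
  calc c * ∑ i, x i - Fintype.card ι * v * exp (c - 1) = ∑ i, (c * x i - v * exp (c - 1)) := by
        rw [Finset.sum_sub_distrib, Finset.mul_sum, Finset.sum_const, Finset.card_univ,
          nsmul_eq_mul, mul_assoc]
    _ ≤ _ := Finset.sum_le_sum fun i _ => mul_sub_mul_exp_le_mul_log_div c (hx i) hv

theorem continuousOn_negEntropyPerspective :
    ContinuousOn (fun q : ℝ × (ι → ℝ) => negEntropyPerspective q.1 q.2) {q | q.1 ≠ 0} := by
  have h : ContinuousOn (fun q : ℝ × (ι → ℝ) => ∑ i, q.1 * (q.2 i / q.1 * log (q.2 i / q.1)))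
      {q | q.1 ≠ 0} := by
    refine continuousOn_finsetSum _ fun i _ => continuousOn_fst.mul ?_
    exact continuous_mul_log.comp_continuousOn (by fun_prop (disch := exact fun _ hq => hq))
  exact h.congr fun q hq => Finset.sum_congr rfl fun i _ => mul_log_div_eq _ hq

theorem closure_epigraph_subset :
    closure (epigraph ι) ⊆ {p | 0 ≤ p.2.1 ∧ (∀ i, 0 ≤ p.2.2 i) ∧
      ∀ c, c * ∑ i, p.2.2 i - Fintype.card ι * p.2.1 * exp (c - 1) ≤ p.1} := by
  refine closure_minimal (fun p ⟨hv, hx, hF⟩ =>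
    ⟨hv.le, hx, fun c => (affine_le_negEntropyPerspective c hx hv).trans hF⟩) ?_
  simp only [ofPred_and, ofPred_forall]
  exact (isClosed_le continuous_const (by fun_prop)).inter
    ((isClosed_iInter fun i => isClosed_le continuous_const (by fun_prop)).inter
      (isClosed_iInter fun c => isClosed_le (by fun_prop) (by fun_prop)))

theorem mem_epigraph_of_mem_closure {p : ℝ × ℝ × (ι → ℝ)} (hp : p ∈ closure (epigraph ι))
    (hv : 0 < p.2.1) : p ∈ epigraph ι := by
  obtain ⟨-, hx, -⟩ := closure_epigraph_subset hp
  refine ⟨hv, hx, ContinuousWithinAt.closure_le hp ?_ continuousWithinAt_fst fun q hq => hq.2.2⟩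
  have hF := (continuousOn_negEntropyPerspective (ι := ι)).continuousAt
    ((isOpen_ne_fun continuous_fst continuous_const).mem_nhds hv.ne')
  exact (hF.comp continuous_snd.continuousAt).continuousWithinAt

theorem boundary_subset_closure_epigraph :
    {p : ℝ × ℝ × (ι → ℝ) | 0 ≤ p.1 ∧ 0 ≤ p.2.1 ∧ p.2.2 = 0} ⊆ closure (epigraph ι) := by
  have h : Ici (0 : ℝ) ×ˢ Ioi (0 : ℝ) ×ˢ ({0} : Set (ι → ℝ)) ⊆ epigraph ι := by
    rintro ⟨t, v, x⟩ ⟨ht, hv, rfl : x = 0⟩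
    exact ⟨hv, fun _ => le_rfl, by simpa [negEntropyPerspective] using ht⟩
  have := closure_mono h
  rwa [closure_prod_eq, closure_prod_eq, closure_Ioi, closure_singleton,
    isClosed_Ici.closure_eq] at this

theorem closure_epigraph : closure (epigraph ι) =
    epigraph ι ∪ {p : ℝ × ℝ × (ι → ℝ) | 0 ≤ p.1 ∧ 0 ≤ p.2.1 ∧ p.2.2 = 0} := by
  refine subset_antisymm (fun p hp => ?_)
    (union_subset subset_closure boundary_subset_closure_epigraph)
  obtain ⟨hv, hx, haff⟩ := closure_epigraph_subset hp
  rcases hv.eq_or_lt with hv | hv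
  · rw [← hv] at haff
    have hsum : ∑ i, p.2.2 i = 0 := eq_zero_of_forall_mul_le fun c => by simpa using haff c
    refine Or.inr ⟨by simpa using haff 0, hv.le, funext fun i => ?_⟩
    exact (Finset.sum_eq_zero_iff_of_nonneg fun i _ => hx i).1 hsum i (Finset.mem_univ i)
  · exact Or.inl (mem_epigraph_of_mem_closure hp hv)

end VectorEntropyCone

/-- Let
`K⁰_vEnt = {(t, v, x) ∈ ℝ × ℝ_{>0} × ℝⁿ_{≥0} : ∑ᵢ xᵢ·log(xᵢ/v) ≤ t}`
(with the convention `0·log(0/v) = 0`, which holds automatically since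
`Real.log 0 = 0`). Its closure in `ℝ^{n+2}` equals
`K⁰_vEnt ∪ (ℝ_{≥0} × ℝ_{≥0} × {0}ⁿ)`. -/
theorem stmt6 (n : ℕ) :
    closure {p : ℝ × ℝ × (Fin n → ℝ) |
        0 < p.2.1 ∧ (∀ i, 0 ≤ p.2.2 i) ∧
          ∑ i, p.2.2 i * Real.log (p.2.2 i / p.2.1) ≤ p.1} =
    {p : ℝ × ℝ × (Fin n → ℝ) |
        0 < p.2.1 ∧ (∀ i, 0 ≤ p.2.2 i) ∧
          ∑ i, p.2.2 i * Real.log (p.2.2 i / p.2.1) ≤ p.1} ∪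
    {p : ℝ × ℝ × (Fin n → ℝ) | 0 ≤ p.1 ∧ 0 ≤ p.2.1 ∧ p.2.2 = 0} :=
  VectorEntropyCone.closure_epigraph
end

section
/- Let K_log ⊆ ℝ^{n+2} be the logarithmic cone. Then its dual cone K*_log = {y ∈ ℝ^{n+2} : ⟨y, z⟩ ≥ 0 for all z ∈ K_log} equals {(t, v, x) ∈ ℝ_{>0} × ℝ × ℝ^n_{>0} : v ≥ t(−n − ∑_{i=1}^n log(x_i/t))} ∪ ({0} × ℝ_{≥0} × ℝ^n_{≥0}). -/
open Finset

/-- The logarithmic cone `K_log ⊆ ℝ^{n+2}`, the closure of the epigraph of the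
perspective of `f(x) = −∑ᵢ log xᵢ` with domain `ℝⁿ_{>0}`. -/
def Klog (n : ℕ) : Set (ℝ × ℝ × (Fin n → ℝ)) :=
  closure {p | 0 < p.2.1 ∧ (∀ i, 0 < p.2.2 i) ∧
    -∑ i, p.2.1 * Real.log (p.2.2 i / p.2.1) ≤ p.1}

lemma helper_eps (a b : ℝ) (h : ∀ ε : ℝ, 0 < ε → 0 ≤ a + ε * b) : 0 ≤ a := by
  by_contra h'
  push_neg at h'
  have hb : 0 < b := by
    have := h 1 one_pos
    nlinarith
  have h2 := h (-a / (2 * b)) (div_pos (by linarith) (by linarith))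
  have h3 : -a / (2 * b) * b = -a / 2 := by field_simp
  rw [h3] at h2
  linarith

lemma key_iff (n : ℕ) (τ ν : ℝ) (ξ : Fin n → ℝ) :
    (∀ z ∈ Klog n, τ * z.1 + ν * z.2.1 + ∑ i, ξ i * z.2.2 i ≥ 0) ↔
    ∀ t v (x : Fin n → ℝ), 0 < v → (∀ i, 0 < x i) →
      -∑ i, v * Real.log (x i / v) ≤ t → 0 ≤ τ * t + ν * v + ∑ i, ξ i * x i := by
  constructor
  · intro h t v x hv hx ht
    exact h (t, v, x) (subset_closure ⟨hv, hx, ht⟩)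
  · intro h z hz
    have hcont : Continuous (fun z : ℝ × ℝ × (Fin n → ℝ) =>
        τ * z.1 + ν * z.2.1 + ∑ i, ξ i * z.2.2 i) := by
      apply Continuous.add
      apply Continuous.add
      · exact continuous_const.mul continuous_fst
      · exact continuous_const.mul (continuous_fst.comp continuous_snd)
      · exact continuous_finset_sum _ fun i _ =>
          continuous_const.mul ((continuous_apply i).comp (continuous_snd.comp continuous_snd))
    have hcl : Klog n ⊆ {z : ℝ × ℝ × (Fin n → ℝ) |
        0 ≤ τ * z.1 + ν * z.2.1 + ∑ i, ξ i * z.2.2 i} :=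
      closure_minimal (fun w hw => h w.1 w.2.1 w.2.2 hw.1 hw.2.1 hw.2.2)
        (isClosed_le continuous_const hcont)
    exact hcl hz

/-- The dual cone of the logarithmic cone `K_log` (with respect to
the standard inner product on `ℝ^{n+2}`) equals
`{(t, v, x) ∈ ℝ_{>0} × ℝ × ℝⁿ_{>0} : v ≥ t(−n − ∑ᵢ log(xᵢ/t))} ∪ ({0} × ℝ_{≥0} × ℝⁿ_{≥0})`. -/
theorem stmt7 (n : ℕ) :
    {y : ℝ × ℝ × (Fin n → ℝ) | ∀ z ∈ Klog n,
        y.1 * z.1 + y.2.1 * z.2.1 + ∑ i, y.2.2 i * z.2.2 i ≥ 0} =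
    {y : ℝ × ℝ × (Fin n → ℝ) | 0 < y.1 ∧ (∀ i, 0 < y.2.2 i) ∧
        y.2.1 ≥ y.1 * (-(n : ℝ) - ∑ i, Real.log (y.2.2 i / y.1))} ∪
    {y : ℝ × ℝ × (Fin n → ℝ) | y.1 = 0 ∧ 0 ≤ y.2.1 ∧ ∀ i, 0 ≤ y.2.2 i} := by
  ext ⟨τ, ν, ξ⟩
  simp only [Set.mem_setOf_eq, Set.mem_union]
  rw [key_iff]
  constructor
  · -- forward: dual condition implies the explicit description
    intro h
    -- first: τ ≥ 0
    have hτ : 0 ≤ τ := by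
      by_contra hτ'
      push_neg at hτ'
      set A : ℝ := |ν| + ∑ i, |ξ i| + 1 with hA
      have hApos : 0 < A := by positivity
      set M : ℝ := A / (-τ) with hM
      have hMpos : 0 < M := div_pos hApos (by linarith)
      have hmem := h M 1 (fun _ => 1) one_pos (fun _ => one_pos)
        (by simp [Real.log_one]; linarith)
      have h4 : M * -τ = A := div_mul_cancel₀ A (by linarith)
      have hτM : τ * M = -A := by linear_combination -h4
      have h1 : ν ≤ |ν| := le_abs_self ν
      have h2 : ∑ i, ξ i ≤ ∑ i, |ξ i| :=
        Finset.sum_le_sum fun i _ => le_abs_self _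
      rw [hτM] at hmem
      simp only [mul_one] at hmem
      linarith
    rcases hτ.lt_or_eq with hτpos | hτ0
    · -- τ > 0 case: left disjunct
      left
      have hξ : ∀ j, 0 < ξ j := by
        intro j
        by_contra hξj
        push_neg at hξj
        set A : ℝ := |ν| + ∑ i, |ξ i| + 1 with hA
        have hApos : 0 < A := by positivity
        set M : ℝ := Real.exp (A / τ) with hM
        have hMpos : 0 < M := Real.exp_pos _
        set x : Fin n → ℝ := fun i => if i = j then M else 1 with hx
        have hxpos : ∀ i, 0 < x i := by
          intro i; rw [hx]; dsimp; split <;> [exact hMpos; exact one_pos]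
        have hsum : ∑ i, (1:ℝ) * Real.log (x i / 1) = A / τ := by
          rw [hx]
          simp only [div_one, one_mul]
          have : ∀ i, Real.log (if i = j then M else 1)
              = if i = j then A / τ else 0 := by
            intro i; split
            · rw [hM, Real.log_exp]
            · exact Real.log_one
          simp only [this, Finset.sum_ite_eq' Finset.univ j (fun _ => A / τ),
            Finset.mem_univ, if_true]
        have hmem := h (-(A / τ)) 1 x one_pos hxpos (by rw [hsum])
        have h4 : A / τ * τ = A := div_mul_cancel₀ A hτpos.ne'
        have hτt : τ * -(A / τ) = -A := by linear_combination -h4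
        rw [hτt] at hmem
        have hsx : ∑ i, ξ i * x i = ξ j * M + ∑ i ∈ Finset.univ.erase j, ξ i := by
          rw [← Finset.add_sum_erase _ _ (Finset.mem_univ j)]
          congr 1
          · rw [hx]; simp
          · apply Finset.sum_congr rfl
            intro i hi
            rw [hx]; simp [Finset.ne_of_mem_erase hi]
        have h1 : ξ j * M ≤ 0 := mul_nonpos_of_nonpos_of_nonneg hξj hMpos.le
        have h2 : ∑ i ∈ Finset.univ.erase j, ξ i ≤ ∑ i, |ξ i| := by
          calc ∑ i ∈ Finset.univ.erase j, ξ i ≤ ∑ i ∈ Finset.univ.erase j, |ξ i| :=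
                Finset.sum_le_sum fun i _ => le_abs_self _
            _ ≤ ∑ i, |ξ i| := Finset.sum_le_sum_of_subset_of_nonneg
                (Finset.erase_subset _ _) (fun i _ _ => abs_nonneg _)
        have h3 : ν ≤ |ν| := le_abs_self ν
        rw [hsx] at hmem
        simp only [mul_one] at hmem
        linarith
      refine ⟨hτpos, hξ, ?_⟩
      -- plug in the optimal point x i = τ / ξ i, v = 1
      set x : Fin n → ℝ := fun i => τ / ξ i with hx
      have hxpos : ∀ i, 0 < x i := fun i => div_pos hτpos (hξ i)
      have hmem := h (-∑ i, (1:ℝ) * Real.log (x i / 1)) 1 x one_pos hxpos le_rfl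
      have hsx : ∑ i, ξ i * x i = (n : ℝ) * τ := by
        rw [hx]
        have : ∀ i ∈ Finset.univ, ξ i * (τ / ξ i) = τ := by
          intro i _; rw [mul_comm]; exact div_mul_cancel₀ τ (hξ i).ne'
        rw [Finset.sum_congr rfl this, Finset.sum_const, Finset.card_univ,
          Fintype.card_fin, nsmul_eq_mul]
      have hlog : ∑ i, (1:ℝ) * Real.log (x i / 1) = -∑ i, Real.log (ξ i / τ) := by
        rw [← Finset.sum_neg_distrib]
        apply Finset.sum_congr rfl
        intro i _
        rw [hx]
        simp only [div_one, one_mul]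
        rw [Real.log_div hτpos.ne' (hξ i).ne', Real.log_div (hξ i).ne' hτpos.ne']
        ring
      rw [hsx, hlog] at hmem
      simp only [mul_one, neg_neg] at hmem
      have hms : τ * ∑ i, Real.log (ξ i / τ) = ∑ i, τ * Real.log (ξ i / τ) :=
        Finset.mul_sum _ _ _
      nlinarith
    · -- τ = 0 case: right disjunct
      right
      refine ⟨hτ0.symm, ?_, ?_⟩
      · apply helper_eps ν (∑ i, ξ i)
        intro ε hε
        have hmem := h (-∑ i, (1:ℝ) * Real.log (ε / 1)) 1 (fun _ => ε) one_pos
          (fun _ => hε) le_rfl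
        rw [← hτ0] at hmem
        have : ∑ i, ξ i * ε = ε * ∑ i, ξ i := by
          rw [Finset.mul_sum]
          exact Finset.sum_congr rfl fun i _ => mul_comm _ _
        rw [this] at hmem
        linarith
      · intro j
        apply helper_eps (ξ j) (ν + ∑ i ∈ Finset.univ.erase j, ξ i)
        intro ε hε
        set x : Fin n → ℝ := fun i => if i = j then 1 else ε with hx
        have hxpos : ∀ i, 0 < x i := by
          intro i; rw [hx]; dsimp; split <;> [exact one_pos; exact hε]
        have hmem := h (-∑ i, ε * Real.log (x i / ε)) ε x hε hxpos le_rfl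
        rw [← hτ0] at hmem
        have hsx : ∑ i, ξ i * x i = ξ j + ε * ∑ i ∈ Finset.univ.erase j, ξ i := by
          rw [← Finset.add_sum_erase _ _ (Finset.mem_univ j)]
          congr 1
          · rw [hx]; simp
          · rw [Finset.mul_sum]
            apply Finset.sum_congr rfl
            intro i hi
            rw [hx]; simp [Finset.ne_of_mem_erase hi, mul_comm]
        rw [hsx] at hmem
        linarith [hmem]
  · -- reverse: explicit description implies dual condition
    rintro (⟨hτpos, hξ, hν⟩ | ⟨hτ0, hν, hξ⟩) <;> intro t v x hv hx ht
    · -- τ > 0 case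
      have hτv : 0 < τ * v := mul_pos hτpos hv
      have key_i : ∀ i, τ * v * Real.log (x i / v) + τ * v * (1 + Real.log (ξ i / τ))
          ≤ ξ i * x i := by
        intro i
        have hξi := hξ i
        have hxi := hx i
        have hpos : 0 < ξ i * x i / (τ * v) := div_pos (mul_pos hξi hxi) hτv
        have hlog := Real.log_le_sub_one_of_pos hpos
        have heq : Real.log (ξ i * x i / (τ * v))
            = Real.log (x i / v) + Real.log (ξ i / τ) := by
          rw [Real.log_div (mul_pos hξi hxi).ne' hτv.ne', Real.log_mul (hξ i).ne' (hx i).ne',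
            Real.log_mul hτpos.ne' hv.ne', Real.log_div (hx i).ne' hv.ne',
            Real.log_div (hξ i).ne' hτpos.ne']
          ring
        rw [heq] at hlog
        have h2 := mul_le_mul_of_nonneg_left hlog hτv.le
        have h3 : τ * v * (ξ i * x i / (τ * v) - 1) = ξ i * x i - τ * v := by
          field_simp
        rw [h3] at h2
        linarith
      have hsum := Finset.sum_le_sum (fun i (_ : i ∈ Finset.univ) => key_i i)
      have e1 : ∑ i, (τ * v * Real.log (x i / v) + τ * v * (1 + Real.log (ξ i / τ)))
          = τ * v * (∑ i, Real.log (x i / v)) + τ * v * ((n : ℝ) + ∑ i, Real.log (ξ i / τ)) := by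
        rw [Finset.sum_add_distrib, ← Finset.mul_sum, ← Finset.mul_sum]
        congr 1
        rw [mul_add]
        congr 1
        rw [Finset.sum_add_distrib, Finset.sum_const, Finset.card_univ, Fintype.card_fin,
          nsmul_eq_mul, mul_one, mul_add]
      rw [e1] at hsum
      have ht' : -(v * ∑ i, Real.log (x i / v)) ≤ t := by
        rw [← Finset.mul_sum] at ht
        exact ht
      have hτt : τ * -(v * ∑ i, Real.log (x i / v)) ≤ τ * t :=
        mul_le_mul_of_nonneg_left ht' hτpos.le
      have hνv : τ * (-(n : ℝ) - ∑ i, Real.log (ξ i / τ)) * v ≤ ν * v :=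
        mul_le_mul_of_nonneg_right hν hv.le
      nlinarith
    · -- τ = 0 case
      rw [hτ0]
      have h1 : 0 ≤ ν * v := mul_nonneg hν hv.le
      have h2 : 0 ≤ ∑ i, ξ i * x i :=
        Finset.sum_nonneg fun i _ => mul_nonneg (hξ i) (hx i).le
      linarith
end

section
/- Let F : Sⁿ → ℝ ∪ {+∞} be the negative von Neumann entropy, F(X) = ∑_{i=1}^n λ_i(X) log λ_i(X) for X positive semidefinite (with the convention 0 log 0 = 0) and F(X) = +∞ otherwise. Then for every real symmetric n×n matrix Y, the Fenchel conjugate satisfies F*(Y) = sup{Tr(XY) − F(X) : X ∈ Sⁿ positive semidefinite} = Tr(exp(Y − I)), where exp is the matrix exponential and I the identity matrix. -/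
open Matrix Finset

/-!
Write a positive semidefinite `X` as `U diag(d) Uᵀ` with `U` orthogonal. Then
`Tr(XY) - F(X) = ∑ᵢ (dᵢ cᵢ - dᵢ log dᵢ)` with `cᵢ = (UᵀYU)ᵢᵢ`, and the scalar inequality
`t c - t log t ≤ exp(c - 1)` bounds each term by `exp((Uᵀ(Y - I)U)ᵢᵢ)`. By Peierls' inequality
this is at most `(Uᵀ exp(Y - I) U)ᵢᵢ`: the diagonal entry of `UᵀAU` is a convex combination of
the eigenvalues of `A`, and `exp` is convex. Summing over `i` gives `Tr exp(Y - I)`, and equality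
holds at `X = exp(Y - I)`, whose eigenvalues are the exponentials of those of `Y - I`.
-/

lemma Real.mul_sub_mul_log_le_exp_sub_one {t : ℝ} (ht : 0 ≤ t) (c : ℝ) :
    t * c - t * Real.log t ≤ Real.exp (c - 1) := by
  rcases ht.eq_or_lt with rfl | ht
  · simpa using (Real.exp_pos _).le
  · have h := Real.add_one_le_exp (c - 1 - Real.log t)
    have hexp : t * Real.exp (c - 1 - Real.log t) = Real.exp (c - 1) := by
      rw [Real.exp_sub, Real.exp_log ht]
      field_simp
    nlinarith

namespace Matrix

variable {ι : Type*} [Fintype ι] [DecidableEq ι] {A X Y : Matrix ι ι ℝ}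

namespace IsHermitian

lemma exp_eq_cfc (hA : A.IsHermitian) : NormedSpace.exp A = cfc Real.exp A := by
  -- `NormedSpace.exp` only sees the topology, so any compatible C⋆-norm may be used here.
  open scoped Matrix.Norms.L2Operator in
  exact (CFC.real_exp_eq_normedSpace_exp hA.isSelfAdjoint).symm

lemma cfc_eq_mul_diagonal_mul_star (hA : A.IsHermitian) (f : ℝ → ℝ) :
    cfc f A = (hA.eigenvectorUnitary : Matrix ι ι ℝ) * diagonal (f ∘ hA.eigenvalues) *
      star (hA.eigenvectorUnitary : Matrix ι ι ℝ) := by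
  rw [hA.cfc_eq, IsHermitian.cfc, Unitary.conjStarAlgAut_apply, RCLike.ofReal_real_eq_id,
    Function.id_comp]

lemma sum_eigenvalues_cfc (hA : A.IsHermitian) (f g : ℝ → ℝ) {B : Matrix ι ι ℝ}
    (hB : B.IsHermitian) (hBA : B = cfc f A) :
    ∑ i, g (hB.eigenvalues i) = ∑ i, g (f (hA.eigenvalues i)) := by
  subst hBA
  have hroots := hB.roots_charpoly_eq_eigenvalues
  rw [hA.charpoly_cfc_eq, Polynomial.roots_prod _ _ (by simp [prod_ne_zero_iff,
    Polynomial.X_sub_C_ne_zero])] at hroots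
  simp only [Polynomial.roots_X_sub_C, RCLike.ofReal_real_eq_id, id, Multiset.bind_singleton]
    at hroots
  have := congrArg (fun s => (s.map g).sum) hroots
  simp only [Multiset.map_map, Function.comp_def] at this
  exact this.symm

lemma trace_cfc (hA : A.IsHermitian) (f : ℝ → ℝ) :
    (cfc f A).trace = ∑ i, f (hA.eigenvalues i) := by
  have hB : (cfc f A).IsHermitian := cfc_predicate f A
  simpa using hB.trace_eq_sum_eigenvalues.trans (hA.sum_eigenvalues_cfc f id hB rfl)

lemma star_mul_cfc_mul (hA : A.IsHermitian) (f : ℝ → ℝ) (U : Matrix ι ι ℝ) :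
    star U * cfc f A * U = star (star (hA.eigenvectorUnitary : Matrix ι ι ℝ) * U) *
      diagonal (f ∘ hA.eigenvalues) * (star (hA.eigenvectorUnitary : Matrix ι ι ℝ) * U) := by
  simp only [hA.cfc_eq_mul_diagonal_mul_star, star_mul, star_star, Matrix.mul_assoc]

lemma posSemidef_cfc (hA : A.IsHermitian) {f : ℝ → ℝ} (hf : ∀ x, 0 ≤ f x) :
    (cfc f A).PosSemidef := by
  rw [hA.cfc_eq_mul_diagonal_mul_star]
  exact (posSemidef_diagonal_iff.mpr fun i => hf _).mul_mul_conjTranspose_same _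

end IsHermitian

lemma star_mul_diagonal_mul_apply_self (W : Matrix ι ι ℝ) (d : ι → ℝ) (i : ι) :
    (star W * diagonal d * W) i i = ∑ j, W j i ^ 2 * d j := by
  rw [mul_apply]
  refine sum_congr rfl fun j _ => ?_
  rw [mul_diagonal, star_apply, star_trivial]
  ring

lemma sum_sq_apply_of_mem_unitaryGroup {W : Matrix ι ι ℝ} (hW : W ∈ unitaryGroup ι ℝ) (i : ι) :
    ∑ j, W j i ^ 2 = 1 := by
  have := congrFun (congrFun (mem_unitaryGroup_iff'.mp hW) i) i
  simpa [mul_apply, sq] using this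

theorem _root_.ConvexOn.map_diag_conj_le_diag_conj_cfc {f : ℝ → ℝ} (hf : ConvexOn ℝ Set.univ f)
    (hA : A.IsHermitian) {U : Matrix ι ι ℝ} (hU : U ∈ unitaryGroup ι ℝ) (i : ι) :
    f ((star U * A * U) i i) ≤ (star U * cfc f A * U) i i := by
  set W := star (hA.eigenvectorUnitary : Matrix ι ι ℝ) * U
  have hW : W ∈ unitaryGroup ι ℝ := mul_mem (Unitary.star_mem hA.eigenvectorUnitary.2) hU
  conv_lhs => rw [← cfc_id' ℝ A]
  rw [hA.star_mul_cfc_mul, hA.star_mul_cfc_mul, star_mul_diagonal_mul_apply_self,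
    star_mul_diagonal_mul_apply_self]
  exact hf.map_sum_le (fun j _ => sq_nonneg _) (sum_sq_apply_of_mem_unitaryGroup hW i)
    fun _ _ => trivial

lemma trace_mul_diagonal_mul_star_mul (U : Matrix ι ι ℝ) (d : ι → ℝ) (M : Matrix ι ι ℝ) :
    (U * diagonal d * star U * M).trace = ∑ i, d i * (star U * M * U) i i := by
  rw [Matrix.mul_assoc, Matrix.mul_assoc, trace_mul_comm]
  simp only [trace, diag_apply, Matrix.mul_assoc, diagonal_mul]

lemma trace_star_mul_mul {U : Matrix ι ι ℝ} (hU : U ∈ unitaryGroup ι ℝ) (M : Matrix ι ι ℝ) :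
    (star U * M * U).trace = M.trace := by
  rw [trace_mul_cycle, mem_unitaryGroup_iff.mp hU, Matrix.one_mul]

theorem PosSemidef.trace_mul_sub_sum_mul_log_le (hX : X.PosSemidef) (hY : Y.IsHermitian) :
    (X * Y).trace - ∑ i, hX.1.eigenvalues i * Real.log (hX.1.eigenvalues i) ≤
      (NormedSpace.exp (Y - 1)).trace := by
  set U : Matrix ι ι ℝ := (hX.1.eigenvectorUnitary : Matrix ι ι ℝ)
  have hU : U ∈ unitaryGroup ι ℝ := hX.1.eigenvectorUnitary.2
  have htr : (X * Y).trace = ∑ i, hX.1.eigenvalues i * (star U * Y * U) i i := by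
    conv_lhs => rw [← cfc_id' ℝ X hX.1.isSelfAdjoint, hX.1.cfc_eq_mul_diagonal_mul_star]
    exact trace_mul_diagonal_mul_star_mul _ _ _
  rw [htr, (hY.sub isHermitian_one).exp_eq_cfc, ← trace_star_mul_mul hU, trace,
    ← sum_sub_distrib]
  gcongr with i
  calc _ ≤ Real.exp ((star U * Y * U) i i - 1) :=
        Real.mul_sub_mul_log_le_exp_sub_one (hX.eigenvalues_nonneg i) _
    _ = Real.exp ((star U * (Y - 1) * U) i i) := by
        rw [Matrix.mul_sub, Matrix.sub_mul, Matrix.mul_one, mem_unitaryGroup_iff'.mp hU]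
        simp
    _ ≤ _ := convexOn_exp.map_diag_conj_le_diag_conj_cfc (hY.sub isHermitian_one) hU i

theorem trace_mul_sub_sum_mul_log_eq_trace (hY : Y.IsHermitian) (hX : X.IsHermitian)
    (hXY : X = NormedSpace.exp (Y - 1)) :
    (X * Y).trace - ∑ i, hX.eigenvalues i * Real.log (hX.eigenvalues i) = X.trace := by
  have hA : (Y - 1).IsHermitian := hY.sub isHermitian_one
  have hXA : X = cfc Real.exp (Y - 1) := hXY.trans hA.exp_eq_cfc
  have hent : ∑ i, hX.eigenvalues i * Real.log (hX.eigenvalues i) =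
      ∑ i, Real.exp (hA.eigenvalues i) * hA.eigenvalues i := by
    simp only [hA.sum_eigenvalues_cfc Real.exp (fun t => t * Real.log t) hX hXA, Real.log_exp]
  have hcross : (X * (Y - 1)).trace = ∑ i, Real.exp (hA.eigenvalues i) * hA.eigenvalues i := by
    rw [hXA, ← hA.trace_cfc (fun x => Real.exp x * x), cfc_mul Real.exp (fun x => x) (Y - 1),
      cfc_id' ℝ (Y - 1)]
  rw [show X * Y = X * (Y - 1) + X by rw [Matrix.mul_sub, Matrix.mul_one, sub_add_cancel],
    trace_add, hcross, hent, add_sub_cancel_left]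
end Matrix

lemma sum_eigsDesc {n : ℕ} {X : Matrix (Fin n) (Fin n) ℝ} (hX : X.IsHermitian) (g : ℝ → ℝ) :
    ∑ i, g (eigsDesc X i) = ∑ i, g (hX.eigenvalues i) := by
  rw [eigsDesc, dif_pos hX]
  exact Equiv.sum_comp (Fin.revPerm.trans (Tuple.sort _)) (g ∘ hX.eigenvalues)

/-- Let `F` be the negative von Neumann entropy,
`F(X) = ∑ᵢ λᵢ(X) log λᵢ(X)` for `X` positive semidefinite (with `0 log 0 = 0`, which
holds automatically since `Real.log 0 = 0`) and `+∞` otherwise. Then for every real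
symmetric matrix `Y`,
`F*(Y) = sup {Tr(XY) − F(X) : X positive semidefinite} = Tr(exp(Y − I))`,
where `exp` is the matrix exponential. (The supremum is computed in `EReal`;
`Matrix.PosSemidef` includes symmetry.) -/
theorem stmt14 {n : ℕ} (Y : Matrix (Fin n) (Fin n) ℝ) (hY : Y.IsHermitian) :
    (⨆ X : {X : Matrix (Fin n) (Fin n) ℝ // X.PosSemidef},
        (((X.1 * Y).trace -
            ∑ i, eigsDesc X.1 i * Real.log (eigsDesc X.1 i) : ℝ) : EReal)) =
      (((NormedSpace.exp (Y - 1)).trace : ℝ) : EReal) := by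
  have hA : (Y - 1).IsHermitian := hY.sub isHermitian_one
  have hE : (NormedSpace.exp (Y - 1)).PosSemidef :=
    hA.exp_eq_cfc ▸ hA.posSemidef_cfc fun x => (Real.exp_pos x).le
  apply le_antisymm
  · refine iSup_le fun X => ?_
    rw [sum_eigsDesc X.2.1 fun t => t * Real.log t]
    exact_mod_cast X.2.trace_mul_sub_sum_mul_log_le hY
  · refine le_iSup_of_le ⟨_, hE⟩ ?_
    rw [sum_eigsDesc hE.1 fun t => t * Real.log t, 
      trace_mul_sub_sum_mul_log_eq_trace hY hE.1 rfl]
end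

section
/- Let F : Sⁿ → ℝ ∪ {+∞} be the negative root-determinant function, F(X) = −(det X)^{1/n} for X positive semidefinite and F(X) = +∞ otherwise. Then for every real symmetric n×n matrix Y, the Fenchel conjugate F*(Y) = sup{Tr(XY) + (det X)^{1/n} : X ∈ Sⁿ positive semidefinite} satisfies: F*(Y) = 0 if −Y is positive semidefinite and (det(−Y))^{1/n} ≥ 1/n, and F*(Y) = +∞ otherwise. -/
/-!
For positive semidefinite `X` and `Z`, AM-GM applied to the eigenvalues of `√X Z √X` gives
`n (det X det Z)^{1/n} ≤ Tr(XZ)`. With `Z = -Y` this bounds `Tr(XY) + (det X)^{1/n}` by `0` when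
`(det(-Y))^{1/n} ≥ 1/n`, and `X = 0` attains the bound. The objective is positively homogeneous in
`X`, so otherwise it suffices to make it positive at a single `X`: a rank-one `vvᵀ` with
`vᵀYv > 0` if `-Y` is not positive semidefinite, `(-Y)⁻¹` if `-Y` is invertible, and `I + t vvᵀ`
with `Yv = 0`, `t` large, if `-Y` is singular.
-/

open Matrix Finset
open scoped MatrixOrder

namespace Matrix
variable {ι : Type*} [Fintype ι]

theorem posSemidef_vecMulVec_self {R : Type*} [CommRing R] [PartialOrder R] [StarRing R]
    [StarOrderedRing R] [TrivialStar R] (v : ι → R) : (vecMulVec v v).PosSemidef := by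
  simpa using posSemidef_vecMulVec_self_star v

variable [DecidableEq ι]

theorem PosSemidef.card_mul_det_rpow_le_trace {A : Matrix ι ι ℝ} (hA : A.PosSemidef) :
    Fintype.card ι * A.det ^ ((Fintype.card ι : ℝ)⁻¹) ≤ A.trace := by
  rcases isEmpty_or_nonempty ι with hι | hι
  · simp
  have hcard : (0 : ℝ) < Fintype.card ι := by exact_mod_cast Fintype.card_pos
  have amgm := Real.geom_mean_le_arith_mean univ (fun _ ↦ 1) hA.1.eigenvalues
    (fun _ _ ↦ zero_le_one) (by simpa using hcard) (fun i _ ↦ hA.eigenvalues_nonneg i)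
  simp only [Real.rpow_one, sum_const, card_univ, nsmul_eq_mul, mul_one, one_mul] at amgm
  rw [hA.isHermitian.det_eq_prod_eigenvalues, hA.isHermitian.trace_eq_sum_eigenvalues]
  simp only [RCLike.ofReal_real_eq_id, id]
  rw [le_div_iff₀ hcard] at amgm
  linarith

theorem PosSemidef.card_mul_rpow_det_mul_det_le_trace_mul {A B : Matrix ι ι ℝ}
    (hA : A.PosSemidef) (hB : B.PosSemidef) :
    Fintype.card ι * (A.det * B.det) ^ ((Fintype.card ι : ℝ)⁻¹) ≤ (A * B).trace := by
  set S := CFC.sqrt A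
  have hSS : S * S = A := CFC.sqrt_mul_sqrt_self A hA.nonneg
  have hSBS : (S * B * S).PosSemidef := by
    have h := hB.mul_mul_conjTranspose_same S
    rwa [(CFC.sqrt_nonneg A).posSemidef.isHermitian.eq] at h
  have htrace : (S * B * S).trace = (A * B).trace := by rw [trace_mul_cycle, hSS]
  have hdet : (S * B * S).det = A.det * B.det := by
    rw [← hSS, det_mul, det_mul, det_mul]; ring
  simpa [htrace, hdet] using hSBS.card_mul_det_rpow_le_trace

end Matrix

theorem EReal.iSup_coe_eq_top_of_forall_exists_gt {ι : Sort*} {f : ι → ℝ}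
    (h : ∀ c, ∃ i, c < f i) : ⨆ i, (f i : EReal) = ⊤ := by
  refine iSup_eq_top.2 fun b hb ↦ ?_
  obtain ⟨c, hbc, -⟩ := EReal.exists_between_coe_real hb
  obtain ⟨i, hi⟩ := h c
  exact ⟨i, hbc.trans (EReal.coe_lt_coe_iff.2 hi)⟩

section RootDet

variable {n : ℕ}

noncomputable def rootDetObjective (Y X : Matrix (Fin n) (Fin n) ℝ) : ℝ :=
  (X * Y).trace + X.det ^ ((n : ℝ)⁻¹)

theorem rootDetObjective_smul (hn : n ≠ 0) (Y : Matrix (Fin n) (Fin n) ℝ)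
    {X : Matrix (Fin n) (Fin n) ℝ} (hX : 0 ≤ X.det) {t : ℝ} (ht : 0 ≤ t) :
    rootDetObjective Y (t • X) = t * rootDetObjective Y X := by
  rw [rootDetObjective, rootDetObjective, det_smul, Fintype.card_fin,
    Real.mul_rpow (pow_nonneg ht n) hX, Real.pow_rpow_inv_natCast ht hn, smul_mul_assoc,
    trace_smul, smul_eq_mul, mul_add]

theorem rootDetObjective_nonpos (hn : n ≠ 0) {X Y : Matrix (Fin n) (Fin n) ℝ}
    (hX : X.PosSemidef) (hY : (-Y).PosSemidef) (hd : 1 / (n : ℝ) ≤ (-Y).det ^ ((n : ℝ)⁻¹)) :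
    rootDetObjective Y X ≤ 0 := by
  have key := hX.card_mul_rpow_det_mul_det_le_trace_mul hY
  rw [Fintype.card_fin, Real.mul_rpow hX.det_nonneg hY.det_nonneg, Matrix.mul_neg,
    trace_neg] at key
  have hroot : 0 ≤ X.det ^ ((n : ℝ)⁻¹) := Real.rpow_nonneg hX.det_nonneg _
  have hscaled : X.det ^ ((n : ℝ)⁻¹) ≤ n * (X.det ^ ((n : ℝ)⁻¹) * (-Y).det ^ ((n : ℝ)⁻¹)) := by
    calc X.det ^ ((n : ℝ)⁻¹) = n * (X.det ^ ((n : ℝ)⁻¹) * (1 / n)) := by field_simp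
      _ ≤ _ := by gcongr
  rw [rootDetObjective]
  linarith

theorem exists_rootDetObjective_pos_of_not_posSemidef {Y : Matrix (Fin n) (Fin n) ℝ}
    (hY : Y.IsHermitian) (hnY : ¬(-Y).PosSemidef) :
    ∃ X : Matrix (Fin n) (Fin n) ℝ, X.PosSemidef ∧ 0 < rootDetObjective Y X := by
  obtain ⟨v, hv⟩ : ∃ v, 0 < v ⬝ᵥ (Y *ᵥ v) := by
    by_contra! h
    refine hnY (.of_dotProduct_mulVec_nonneg hY.neg fun v ↦ ?_)
    simpa [neg_mulVec] using h v
  have hX := posSemidef_vecMulVec_self v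
  refine ⟨vecMulVec v v, hX, ?_⟩
  have htrace : (vecMulVec v v * Y).trace = v ⬝ᵥ (Y *ᵥ v) := by
    rw [vecMulVec_mul, trace_vecMulVec, dotProduct_mulVec, dotProduct_comm]
  rw [rootDetObjective, htrace]
  exact add_pos_of_pos_of_nonneg hv (Real.rpow_nonneg hX.det_nonneg _)

theorem exists_rootDetObjective_pos_of_det_eq_zero (hn : n ≠ 0) {Y : Matrix (Fin n) (Fin n) ℝ}
    (hY : (-Y).PosSemidef) (hdet : (-Y).det = 0) :
    ∃ X : Matrix (Fin n) (Fin n) ℝ, X.PosSemidef ∧ 0 < rootDetObjective Y X := by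
  obtain ⟨v, hv, hYv⟩ := exists_mulVec_eq_zero_iff.2 hdet
  have hvv : 0 < v ⬝ᵥ v := by
    simpa using dotProduct_self_star_pos_iff.2 hv
  -- `t` is chosen so that `det X = (1 - Tr Y) ^ n`, which makes the objective equal to `1`.
  set R := 1 - Y.trace
  have hR : 1 ≤ R := by have := hY.trace_nonneg; simp only [trace_neg] at this; linarith
  set t := (R ^ n - 1) / (v ⬝ᵥ v)
  have ht : 0 ≤ t := div_nonneg (by linarith [one_le_pow₀ (n := n) hR]) hvv.le
  have hX : (1 + t • vecMulVec v v).PosSemidef :=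
    PosSemidef.one.add ((posSemidef_vecMulVec_self v).smul ht)
  refine ⟨1 + t • vecMulVec v v, hX, ?_⟩
  have htrace : ((1 + t • vecMulVec v v) * Y).trace = Y.trace := by
    have : Y *ᵥ v = 0 := by simpa [neg_mulVec] using hYv
    rw [add_mul, one_mul, trace_add, smul_mul_assoc, trace_smul, trace_mul_comm, mul_vecMulVec,
      this]
    simp
  have hdetX : (1 + t • vecMulVec v v).det = R ^ n := by
    rw [← smul_vecMulVec, vecMulVec_eq Unit, det_one_add_replicateCol_mul_replicateRow,
      dotProduct_smul, smul_eq_mul, div_mul_cancel₀ _ hvv.ne']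
    ring
  rw [rootDetObjective, htrace, hdetX, Real.pow_rpow_inv_natCast (by linarith) hn]
  linarith

theorem exists_rootDetObjective_pos_of_det_rpow_lt (hn : n ≠ 0) {Y : Matrix (Fin n) (Fin n) ℝ}
    (hY : (-Y).PosSemidef) (hdet : (-Y).det ≠ 0) (hd : (-Y).det ^ ((n : ℝ)⁻¹) < 1 / n) :
    ∃ X : Matrix (Fin n) (Fin n) ℝ, X.PosSemidef ∧ 0 < rootDetObjective Y X := by
  refine ⟨(-Y)⁻¹, hY.inv, ?_⟩
  have hdpos : 0 < (-Y).det := hY.det_nonneg.lt_of_ne' hdet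
  have htrace : ((-Y)⁻¹ * Y).trace = -n := by
    rw [← neg_neg Y, Matrix.mul_neg, neg_neg, nonsing_inv_mul _ hdet.isUnit, trace_neg, trace_one,
      Fintype.card_fin]
  have hroot : ((-Y)⁻¹).det ^ ((n : ℝ)⁻¹) = ((-Y).det ^ ((n : ℝ)⁻¹))⁻¹ := by
    rw [det_nonsing_inv, Ring.inverse_eq_inv', Real.inv_rpow hdpos.le]
  have : (n : ℝ) < ((-Y).det ^ ((n : ℝ)⁻¹))⁻¹ := by
    rw [one_div] at hd
    exact (lt_inv_comm₀ (Real.rpow_pos_of_pos hdpos _) (by positivity)).1 hd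
  rw [rootDetObjective, htrace, hroot]
  linarith

theorem exists_rootDetObjective_pos (hn : n ≠ 0) {Y : Matrix (Fin n) (Fin n) ℝ}
    (hY : Y.IsHermitian) (h : ¬((-Y).PosSemidef ∧ 1 / (n : ℝ) ≤ (-Y).det ^ ((n : ℝ)⁻¹))) :
    ∃ X : Matrix (Fin n) (Fin n) ℝ, X.PosSemidef ∧ 0 < rootDetObjective Y X := by
  by_cases hpsd : (-Y).PosSemidef
  · by_cases hdet : (-Y).det = 0
    · exact exists_rootDetObjective_pos_of_det_eq_zero hn hpsd hdet
    · exact exists_rootDetObjective_pos_of_det_rpow_lt hn hpsd hdet (not_le.1 fun hd ↦ h ⟨hpsd, hd⟩)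
  · exact exists_rootDetObjective_pos_of_not_posSemidef hY hpsd

theorem iSup_rootDetObjective_eq_top (hn : n ≠ 0) {Y X₀ : Matrix (Fin n) (Fin n) ℝ}
    (hX₀ : X₀.PosSemidef) (hpos : 0 < rootDetObjective Y X₀) :
    ⨆ X : {X : Matrix (Fin n) (Fin n) ℝ // X.PosSemidef}, (rootDetObjective Y X.1 : EReal) = ⊤ := by
  refine EReal.iSup_coe_eq_top_of_forall_exists_gt fun c ↦ ?_
  set t := max c 0 / rootDetObjective Y X₀ + 1
  have ht : 0 ≤ t := by positivity
  refine ⟨⟨t • X₀, hX₀.smul ht⟩, ?_⟩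
  rw [rootDetObjective_smul hn Y hX₀.det_nonneg ht, add_mul, div_mul_cancel₀ _ hpos.ne', one_mul]
  linarith [le_max_left c 0]

end RootDet

/-- Let `F` be the negative root-determinant function,
`F(X) = −(det X)^{1/n}` for `X` positive semidefinite and `+∞` otherwise. Then for
every real symmetric matrix `Y`, the Fenchel conjugate
`F*(Y) = sup {Tr(XY) + (det X)^{1/n} : X positive semidefinite}` equals `0` if
`−Y` is positive semidefinite and `(det(−Y))^{1/n} ≥ 1/n`, and `+∞` otherwise.
(The supremum is computed in `EReal`; `Matrix.PosSemidef` includes symmetry,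
and `^` denotes the real power `Real.rpow`.) -/
theorem stmt15 {n : ℕ} (hn : 0 < n) (Y : Matrix (Fin n) (Fin n) ℝ)
    (hY : Y.IsHermitian) :
    (((-Y).PosSemidef ∧ (-Y).det ^ ((n : ℝ)⁻¹) ≥ 1 / (n : ℝ) →
      (⨆ X : {X : Matrix (Fin n) (Fin n) ℝ // X.PosSemidef},
          (((X.1 * Y).trace + X.1.det ^ ((n : ℝ)⁻¹) : ℝ) : EReal)) = 0)) ∧
    (¬ ((-Y).PosSemidef ∧ (-Y).det ^ ((n : ℝ)⁻¹) ≥ 1 / (n : ℝ)) →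
      (⨆ X : {X : Matrix (Fin n) (Fin n) ℝ // X.PosSemidef},
          (((X.1 * Y).trace + X.1.det ^ ((n : ℝ)⁻¹) : ℝ) : EReal)) = ⊤) := by
  change ((_ → ⨆ X : {X : Matrix (Fin n) (Fin n) ℝ // X.PosSemidef},
      (rootDetObjective Y X.1 : EReal) = 0) ∧ (_ → _ = ⊤))
  refine ⟨fun ⟨hpsd, hd⟩ ↦ le_antisymm ?_ ?_, fun h ↦ ?_⟩
  · exact iSup_le fun X ↦ EReal.coe_nonpos.2 (rootDetObjective_nonpos hn.ne' X.2 hpsd hd)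
  · refine le_iSup_of_le ⟨0, .zero⟩ ?_
    simp only [rootDetObjective, zero_mul, trace_zero, zero_add, EReal.coe_nonneg]
    exact Real.rpow_nonneg PosSemidef.zero.det_nonneg _
  · obtain ⟨X₀, hX₀, hpos⟩ := exists_rootDetObjective_pos hn.ne' hY h
    exact iSup_rootDetObjective_eq_top hn.ne' hX₀ hpos
end

section
/- Let (t̄, x̄) ∈ ℝ × ℝⁿ and let π be a permutation of {1, …, n} with |x̄_{π(1)}| ≥ |x̄_{π(2)}| ≥ … ≥ |x̄_{π(n)}|. Then there exists a unique k ∈ {0, 1, …, n} such that |x̄_{π(k)}| > max{ (1/(k+1)) (−t̄ + ∑_{i=1}^k |x̄_{π(i)}|), 0 } ≥ |x̄_{π(k+1)}|, where the left (strict) inequality is interpreted as vacuously true when k = 0 and the right inequality is interpreted as vacuously true when k = n. -/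
open Finset

/-- `absEntry x π j = |x_{π(j)}|` in the one-based indexing of the paper, i.e. for
`1 ≤ j ≤ n` it is the absolute value of the entry of `x` at `π` applied to the
`(j-1)`-th zero-based index (junk value `0` for out-of-range `j`). -/
noncomputable def absEntry {n : ℕ} (x : Fin n → ℝ) (π : Equiv.Perm (Fin n))
    (j : ℕ) : ℝ :=
  if h : j - 1 < n then |x (π ⟨j - 1, h⟩)| else 0

/-- The threshold `max{ (1/(k+1)) (−tb + ∑_{i=1}^k |x_{π(i)}|), 0 }`. -/
noncomputable def projThresh {n : ℕ} (tb : ℝ) (x : Fin n → ℝ)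
    (π : Equiv.Perm (Fin n)) (k : ℕ) : ℝ :=
  max ((-tb + ∑ j ∈ Finset.Icc 1 k, absEntry x π j) / ((k : ℝ) + 1)) 0

lemma absEntry_nonneg {n : ℕ} (x : Fin n → ℝ) (π : Equiv.Perm (Fin n)) (j : ℕ) :
    0 ≤ absEntry x π j := by
  unfold absEntry; split
  · positivity
  · exact le_refl 0

lemma absEntry_anti {n : ℕ} (x : Fin n → ℝ) (π : Equiv.Perm (Fin n))
    (hsort : Antitone fun i : Fin n => |x (π i)|) (j : ℕ) :
    absEntry x π (j + 1) ≤ absEntry x π j := by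
  unfold absEntry
  rcases lt_or_ge (j + 1 - 1) n with h | h
  · have hj : j - 1 < n := lt_of_le_of_lt (by omega) h
    rw [dif_pos h, dif_pos hj]
    exact hsort (show (⟨j - 1, hj⟩ : Fin n) ≤ ⟨j + 1 - 1, h⟩ from
      Fin.mk_le_mk.mpr (by omega))
  · rw [dif_neg (by omega)]
    split
    · positivity
    · exact le_refl 0

/-- If `a(k+1) ≤ T(k+1)` then `a(k+1) ≤ T(k)`. -/
lemma thresh_back {n : ℕ} (tb : ℝ) (x : Fin n → ℝ) (π : Equiv.Perm (Fin n)) (k : ℕ)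
    (h : absEntry x π (k + 1) ≤ projThresh tb x π (k + 1)) :
    absEntry x π (k + 1) ≤ projThresh tb x π k := by
  set A := absEntry x π (k + 1) with hA
  set S := ∑ j ∈ Finset.Icc 1 k, absEntry x π j with hS
  have hsum : ∑ j ∈ Finset.Icc 1 (k + 1), absEntry x π j = S + A := by
    rw [Finset.sum_Icc_succ_top (by omega)]
  unfold projThresh at h ⊢
  rw [hsum] at h
  rw [le_max_iff] at h ⊢
  rcases h with h | h
  · left
    have hk2 : (0:ℝ) < (↑(k+1):ℝ) + 1 := by positivity
    have h1 : A * ((↑(k+1):ℝ) + 1) ≤ -tb + (S + A) := (le_div_iff₀ hk2).mp h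
    rw [le_div_iff₀ (by positivity : (0:ℝ) < (k:ℝ) + 1)]
    push_cast at h1 ⊢
    linarith
  · right; exact h

/-- If `a(k+1) ≤ T(k)` then `a(k+1) ≤ T(k+1)`. -/
lemma thresh_fwd {n : ℕ} (tb : ℝ) (x : Fin n → ℝ) (π : Equiv.Perm (Fin n)) (k : ℕ)
    (h : absEntry x π (k + 1) ≤ projThresh tb x π k) :
    absEntry x π (k + 1) ≤ projThresh tb x π (k + 1) := by
  set A := absEntry x π (k + 1) with hA
  set S := ∑ j ∈ Finset.Icc 1 k, absEntry x π j with hS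
  have hsum : ∑ j ∈ Finset.Icc 1 (k + 1), absEntry x π j = S + A := by
    rw [Finset.sum_Icc_succ_top (by omega)]
  unfold projThresh at h ⊢
  rw [hsum]
  rw [le_max_iff] at h ⊢
  rcases h with h | h
  · left
    have h1 : A * ((k:ℝ) + 1) ≤ -tb + S :=
      (le_div_iff₀ (by positivity : (0:ℝ) < (k:ℝ) + 1)).mp h
    rw [le_div_iff₀ (by positivity : (0:ℝ) < (↑(k+1):ℝ) + 1)]
    push_cast at h1 ⊢
    linarith
  · right; exact h

/-- Let `(tb, xb) ∈ ℝ × ℝⁿ` and let `π` be a permutation with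
`|xb_{π(1)}| ≥ … ≥ |xb_{π(n)}|`. Then there is a unique `k ∈ {0, 1, …, n}` with
`|xb_{π(k)}| > max{ (1/(k+1))(−tb + ∑_{i=1}^k |xb_{π(i)}|), 0 } ≥ |xb_{π(k+1)}|`,
where the left (strict) inequality is vacuously true when `k = 0` and the right
inequality is vacuously true when `k = n`. -/
theorem stmt16 {n : ℕ} (tb : ℝ) (xb : Fin n → ℝ) (π : Equiv.Perm (Fin n))
    (hsort : Antitone fun i : Fin n => |xb (π i)|) :
    ∃! k : ℕ, k ≤ n ∧
      (1 ≤ k → absEntry xb π k > projThresh tb xb π k) ∧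
      (k < n → projThresh tb xb π k ≥ absEntry xb π (k + 1)) := by
  classical
  set a := absEntry xb π with ha
  set T := projThresh tb xb π with hT
  have hanti : ∀ j, a (j + 1) ≤ a j := absEntry_anti xb π hsort
  have hB : ∀ k, a (k + 1) ≤ T k → a (k + 1) ≤ T (k + 1) := thresh_fwd tb xb π
  have hAb : ∀ k, a (k + 1) ≤ T (k + 1) → a (k + 1) ≤ T k := thresh_back tb xb π
  -- the predicate and the chosen k
  set P : ℕ → Prop := fun k => 1 ≤ k ∧ k ≤ n ∧ T k < a k with hP
  set k0 := Nat.findGreatest P n with hk0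
  -- k0 satisfies the conditions
  have hk0n : k0 ≤ n := Nat.findGreatest_le n
  have hleft : 1 ≤ k0 → a k0 > T k0 := by
    intro h1
    have hne : k0 ≠ 0 := by omega
    have hex : ∃ m, 0 < m ∧ m ≤ n ∧ P m := by
      by_contra hc
      push_neg at hc
      exact hne (Nat.findGreatest_eq_zero_iff.mpr
        (fun m hm hmn hpm => by
          have := hc m hm hmn; exact this hpm))
    obtain ⟨m, hm0, hmn, hpm⟩ := hex
    exact (Nat.findGreatest_spec hmn hpm).2.2
  have hright : k0 < n → T k0 ≥ a (k0 + 1) := by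
    intro hlt
    have hnot : ¬ P (k0 + 1) :=
      Nat.findGreatest_is_greatest (n := n) (k := k0 + 1) (by rw [← hk0]; omega) (by omega)
    have hle : a (k0 + 1) ≤ T (k0 + 1) := by
      by_contra hc
      push_neg at hc
      exact hnot ⟨by omega, by omega, hc⟩
    exact hAb k0 hle
  -- two distinct solutions lead to a contradiction
  have key : ∀ j j', j < j' →
      (j ≤ n ∧ (1 ≤ j → a j > T j) ∧ (j < n → T j ≥ a (j + 1))) →
      (j' ≤ n ∧ (1 ≤ j' → a j' > T j') ∧ (j' < n → T j' ≥ a (j' + 1))) →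
      False := by
    intro j j' hjj' ⟨hjn, _, hjr⟩ ⟨hj'n, hj'l, _⟩
    have hjlt : j < n := lt_of_lt_of_le hjj' hj'n
    have base : a (j + 1) ≤ T j := hjr hjlt
    have prop : ∀ d, a (j + d + 1) ≤ T (j + d) := by
      intro d
      induction d with
      | zero => exact base
      | succ d ih =>
        have h1 : a (j + d + 1) ≤ T (j + d + 1) := hB (j + d) ih
        exact le_trans (hanti (j + d + 1)) h1
    obtain ⟨p, rfl⟩ : ∃ p, j' = p + 1 := ⟨j' - 1, by omega⟩
    have h2 : a (p + 1) ≤ T p := by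
      have := prop (p - j)
      have he : j + (p - j) = p := by omega
      rwa [he] at this
    have h3 : a (p + 1) ≤ T (p + 1) := hB p h2
    exact absurd (hj'l (by omega)) (not_lt.mpr h3)
  refine ⟨k0, ⟨hk0n, hleft, hright⟩, ?_⟩
  intro m hm
  rcases lt_trichotomy m k0 with h | h | h
  · exact absurd (key m k0 h hm ⟨hk0n, hleft, hright⟩) not_false
  · exact h
  · exact absurd (key k0 m h ⟨hk0n, hleft, hright⟩ hm) not_false
end

section
/- Let (t̄, x̄) ∈ ℝ × ℝⁿ, let π be a permutation of {1, …, n} with |x̄_{π(1)}| ≥ … ≥ |x̄_{π(n)}|, and suppose k ∈ {0, 1, …, n} satisfies |x̄_{π(k)}| > max{ (1/(k+1)) (−t̄ + ∑_{i=1}^k |x̄_{π(i)}|), 0 } ≥ |x̄_{π(k+1)}| (left inequality vacuous when k = 0, right inequality vacuous when k = n). Define t = max{ (1/(k+1)) (k t̄ + ∑_{i=1}^k |x̄_{π(i)}|), t̄ } and x_i = max(|x̄_i| − (t − t̄), 0) · sign(x̄_i) for i = 1, …, n. Then (t, x) is the Euclidean projection of (t̄, x̄) onto the ℓ₁-norm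 cone K_{ℓ₁}, i.e., (t, x) ∈ K_{ℓ₁} and ‖(t, x) − (t̄, x̄)‖ ≤ ‖(s, y) − (t̄, x̄)‖ for every (s, y) ∈ K_{ℓ₁}. -/
open Finset

/-! With `λ = t - tb ≥ 0`, the point `x` is the soft-thresholding of `xb` at level `λ`, so
`xb - x` is `λ` times a subgradient of `‖·‖₁` at `x`. The choice of `k` says exactly which
entries survive the threshold, whence `‖x‖₁ = ∑_{i ≤ k} |xb_{π(i)}| - kλ`; by the choice of `λ`
this is at most `t = tb + λ`, with equality when `λ > 0`. These are the KKT conditions of the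
projection: they give `⟪(tb, xb) - (t, x), (s, y) - (t, x)⟫ ≤ 0` for every `(s, y)` in the
cone, and expanding `‖(s, y) - (tb, xb)‖²` around `(t, x)` yields the distance inequality. -/

noncomputable def softThreshold (lam a : ℝ) : ℝ :=
  max (|a| - lam) 0 * Real.sign a

section SoftThreshold

variable {lam : ℝ}

lemma softThreshold_of_abs_le {a : ℝ} (h : |a| ≤ lam) : softThreshold lam a = 0 := by
  simp [softThreshold, h]

lemma softThreshold_of_neg_of_lt_abs {a : ℝ} (ha : a < 0) (h : lam < |a|) :
    softThreshold lam a = a + lam := by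
  rw [softThreshold, max_eq_left (by linarith), Real.sign_of_neg ha, abs_of_neg ha]
  ring

lemma softThreshold_of_pos_of_lt_abs {a : ℝ} (ha : 0 < a) (h : lam < |a|) :
    softThreshold lam a = a - lam := by
  rw [softThreshold, max_eq_left (by linarith), Real.sign_of_pos ha, abs_of_pos ha, mul_one]

lemma abs_softThreshold (hlam : 0 ≤ lam) (a : ℝ) :
    |softThreshold lam a| = max (|a| - lam) 0 := by
  rcases le_or_gt |a| lam with h | h
  · rw [softThreshold_of_abs_le h, abs_zero, max_eq_right (by linarith)]
  rw [max_eq_left (sub_nonneg.2 h.le)]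
  rcases lt_trichotomy a 0 with ha | rfl | ha
  · rw [softThreshold_of_neg_of_lt_abs ha h]
    rw [abs_of_neg ha] at h ⊢
    rw [abs_of_nonpos (by linarith)]
    ring
  · simp only [abs_zero] at h; linarith
  · rw [softThreshold_of_pos_of_lt_abs ha h]
    rw [abs_of_pos ha] at h ⊢
    rw [abs_of_nonneg (by linarith)]

lemma sub_softThreshold_mul_le (hlam : 0 ≤ lam) (a w : ℝ) :
    (a - softThreshold lam a) * w ≤ lam * |w| := by
  rcases le_or_gt |a| lam with h | h
  · rw [softThreshold_of_abs_le h, sub_zero]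
    exact (le_abs_self _).trans (by rw [abs_mul]; gcongr)
  rcases lt_trichotomy a 0 with ha | rfl | ha
  · rw [softThreshold_of_neg_of_lt_abs ha h]
    nlinarith [neg_abs_le w]
  · simp only [abs_zero] at h; linarith
  · rw [softThreshold_of_pos_of_lt_abs ha h]
    nlinarith [le_abs_self w]

lemma sub_softThreshold_mul_self (hlam : 0 ≤ lam) (a : ℝ) :
    (a - softThreshold lam a) * softThreshold lam a = lam * |softThreshold lam a| := by
  rcases le_or_gt |a| lam with h | h
  · simp [softThreshold_of_abs_le h]
  rcases lt_trichotomy a 0 with ha | rfl | ha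
  · rw [softThreshold_of_neg_of_lt_abs ha h]
    rw [abs_of_neg ha] at h
    rw [abs_of_neg (by linarith)]
    ring
  · simp only [abs_zero] at h; linarith
  · rw [softThreshold_of_pos_of_lt_abs ha h]
    rw [abs_of_pos ha] at h
    rw [abs_of_pos (by linarith)]
    ring

end SoftThreshold

section L1Cone

variable {ι : Type*} [Fintype ι] {lam : ℝ}

lemma sum_sub_softThreshold_mul_sub_le (hlam : 0 ≤ lam) (a y : ι → ℝ) :
    ∑ i, (a i - softThreshold lam (a i)) * (y i - softThreshold lam (a i)) ≤
      lam * (∑ i, |y i| - ∑ i, |softThreshold lam (a i)|) := by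
  calc _ = ∑ i, (a i - softThreshold lam (a i)) * y i -
        ∑ i, lam * |softThreshold lam (a i)| := by
        simp only [mul_sub, sum_sub_distrib, sub_softThreshold_mul_self hlam]
    _ ≤ ∑ i, lam * |y i| - ∑ i, lam * |softThreshold lam (a i)| :=
        sub_le_sub_right (sum_le_sum fun i _ => sub_softThreshold_mul_le hlam _ _) _
    _ = _ := by rw [mul_sub, mul_sum, mul_sum]

lemma sq_dist_softThreshold_le (hlam : 0 ≤ lam) (tb : ℝ) (a : ι → ℝ)
    (hslack : lam * ∑ i, |softThreshold lam (a i)| = lam * (tb + lam))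
    {s : ℝ} {y : ι → ℝ} (hy : ∑ i, |y i| ≤ s) :
    lam ^ 2 + ∑ i, (softThreshold lam (a i) - a i) ^ 2 ≤
      (s - tb) ^ 2 + ∑ i, (y i - a i) ^ 2 := by
  set x := fun i => softThreshold lam (a i)
  have hvar := sum_sub_softThreshold_mul_sub_le hlam a y
  have hexpand : ∑ i, (y i - a i) ^ 2 = ∑ i, (x i - a i) ^ 2 + ∑ i, (y i - x i) ^ 2 -
      2 * ∑ i, (a i - x i) * (y i - x i) := by
    rw [mul_sum, ← sum_add_distrib, ← sum_sub_distrib]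
    exact sum_congr rfl fun i _ => by ring
  have hsq : 0 ≤ ∑ i, (y i - x i) ^ 2 := sum_nonneg fun i _ => sq_nonneg _
  nlinarith [sq_nonneg (s - tb - lam), mul_le_mul_of_nonneg_left hy hlam]

end L1Cone

lemma le_mul_max_div_zero {r : ℝ} (hr : 0 < r) (c : ℝ) : c ≤ r * max (c / r) 0 := by
  rw [← div_le_iff₀' hr]
  exact le_max_left _ _

lemma max_div_zero_mul_sub_eq_zero {r : ℝ} (hr : 0 < r) (c : ℝ) :
    max (c / r) 0 * (c - r * max (c / r) 0) = 0 := by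
  rcases le_total (c / r) 0 with h | h
  · rw [max_eq_right h, zero_mul]
  · rw [max_eq_left h, mul_div_cancel₀ c hr.ne', sub_self, mul_zero]

lemma max_div_sub_eq (k a c : ℝ) (hk : k + 1 ≠ 0) :
    max ((k * a + c) / (k + 1)) a - a = max ((-a + c) / (k + 1)) 0 := by
  rw [← max_sub_sub_right, sub_self]
  congr 1
  field_simp
  ring

lemma sum_Icc_one_eq_sum_range {M : Type*} [AddCommMonoid M] (f : ℕ → M) (k : ℕ) :
    ∑ j ∈ Icc 1 k, f j = ∑ m ∈ range k, f (m + 1) := by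
  rw [← Ico_add_one_right_eq_Icc, sum_Ico_eq_sum_range]
  simp [add_comm]

lemma sum_range_max_sub_eq (g : ℕ → ℝ) {lam : ℝ} {k n : ℕ} (hkn : k ≤ n)
    (hbig : ∀ m < k, lam ≤ g m) (hsmall : ∀ m, k ≤ m → m < n → g m ≤ lam) :
    ∑ m ∈ range n, max (g m - lam) 0 = ∑ m ∈ range k, g m - k * lam := by
  have hinactive : ∑ m ∈ Ico k n, max (g m - lam) 0 = 0 := sum_eq_zero fun m hm =>
    max_eq_right (sub_nonpos.2 (hsmall m (mem_Ico.1 hm).1 (mem_Ico.1 hm).2))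
  rw [← sum_range_add_sum_Ico _ hkn, hinactive, add_zero,
    sum_congr rfl fun m hm => max_eq_left (sub_nonneg.2 (hbig m (mem_range.1 hm))),
    sum_sub_distrib, sum_const, card_range, nsmul_eq_mul]

section AbsEntry

variable {n : ℕ} (x : Fin n → ℝ) (π : Equiv.Perm (Fin n))

lemma absEntry_succ (i : Fin n) : absEntry x π (i + 1) = |x (π i)| := by
  simp [absEntry]

variable {x π}

lemma absEntry_le_of_le (hsort : Antitone fun i : Fin n => |x (π i)|) {j j' : ℕ}
    (hj : 1 ≤ j) (hjj' : j ≤ j') (hj' : j' ≤ n) : absEntry x π j' ≤ absEntry x π j := by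
  rw [absEntry, absEntry, dif_pos (by omega), dif_pos (by omega)]
  exact hsort (Fin.mk_le_mk.2 (by omega))

lemma sum_max_abs_sub_eq {lam : ℝ} {k : ℕ} (hkn : k ≤ n)
    (hbig : ∀ m < k, lam ≤ absEntry x π (m + 1))
    (hsmall : ∀ m, k ≤ m → m < n → absEntry x π (m + 1) ≤ lam) :
    ∑ i, max (|x i| - lam) 0 = ∑ j ∈ Icc 1 k, absEntry x π j - k * lam := by
  rw [← Equiv.sum_comp π, sum_Icc_one_eq_sum_range, ← sum_range_max_sub_eq _ hkn hbig hsmall,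
    ← Fin.sum_univ_eq_sum_range]
  simp only [absEntry_succ]

end AbsEntry

/-- Let `(tb, xb) ∈ ℝ × ℝⁿ`, let `π` be a permutation with
`|xb_{π(1)}| ≥ … ≥ |xb_{π(n)}|`, and let `k ∈ {0, …, n}` satisfy
`|xb_{π(k)}| > max{ (1/(k+1))(−tb + ∑_{i=1}^k |xb_{π(i)}|), 0 } ≥ |xb_{π(k+1)}|`
(left inequality vacuous when `k = 0`, right inequality vacuous when `k = n`). Define
`t = max{ (1/(k+1))(k·tb + ∑_{i=1}^k |xb_{π(i)}|), tb }` and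
`xᵢ = max(|xbᵢ| − (t − tb), 0) · sign(xbᵢ)`. Then `(t, x)` is the Euclidean projection
of `(tb, xb)` onto the ℓ₁-norm cone `K_{ℓ₁} = {(t, x) : ‖x‖₁ ≤ t}`: it lies in the cone
and is at least as close to `(tb, xb)` as any other point of the cone. -/
theorem stmt17 {n : ℕ} (tb : ℝ) (xb : Fin n → ℝ) (π : Equiv.Perm (Fin n))
    (hsort : Antitone fun i : Fin n => |xb (π i)|)
    (k : ℕ) (hkn : k ≤ n)
    (hleft : 1 ≤ k → absEntry xb π k > projThresh tb xb π k)
    (hright : k < n → projThresh tb xb π k ≥ absEntry xb π (k + 1))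
    (t : ℝ)
    (ht : t = max (((k : ℝ) * tb + ∑ j ∈ Finset.Icc 1 k, absEntry xb π j) /
      ((k : ℝ) + 1)) tb)
    (x : Fin n → ℝ)
    (hx : ∀ i, x i = max (|xb i| - (t - tb)) 0 * Real.sign (xb i)) :
    (∑ i, |x i|) ≤ t ∧
    ∀ (s : ℝ) (y : Fin n → ℝ), (∑ i, |y i|) ≤ s →
      Real.sqrt ((t - tb) ^ 2 + ∑ i, (x i - xb i) ^ 2) ≤
      Real.sqrt ((s - tb) ^ 2 + ∑ i, (y i - xb i) ^ 2) := by
  set lam := projThresh tb xb π k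
  set S := ∑ j ∈ Icc 1 k, absEntry xb π j
  have hk : (0 : ℝ) < k + 1 := by positivity
  have hlam : t - tb = lam := by rw [ht]; exact max_div_sub_eq _ _ _ hk.ne'
  have hlam0 : 0 ≤ lam := le_max_right _ _
  have hxsoft : ∀ i, x i = softThreshold lam (xb i) := fun i => by rw [hx i, hlam]; rfl
  have hbig : ∀ m < k, lam ≤ absEntry xb π (m + 1) := fun m hm =>
    (hleft (by omega)).le.trans (absEntry_le_of_le hsort (by omega) (by omega) hkn)
  have hsmall : ∀ m, k ≤ m → m < n → absEntry xb π (m + 1) ≤ lam := fun m hkm hmn =>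
    (absEntry_le_of_le hsort (by omega) (by omega) (by omega)).trans (hright (by omega))
  have hsum : ∑ i, |softThreshold lam (xb i)| = S - k * lam := by
    simp only [abs_softThreshold hlam0]
    exact sum_max_abs_sub_eq hkn hbig hsmall
  have ht' : t = tb + lam := by linarith
  have hfeas : -tb + S ≤ (k + 1) * lam := le_mul_max_div_zero hk _
  have hslack : lam * (-tb + S - (k + 1) * lam) = 0 := max_div_zero_mul_sub_eq_zero hk _
  refine ⟨?_, fun s y hy => Real.sqrt_le_sqrt ?_⟩
  · simp only [hxsoft, hsum, ht']
    linarith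
  · simp only [hxsoft, hlam]
    refine sq_dist_softThreshold_le hlam0 tb xb ?_ hy
    rw [hsum]
    linear_combination hslack
end

section
/- Let D ⊆ ℝ × ℝⁿ be an open convex set, let s : D → ℝ be a convex function that is differentiable on D, and fix (t̄, v̄, x̄) ∈ ℝ × ℝ × ℝⁿ. Define h : D → ℝ by h(v, x) = (1/2)(s(v, x) − t̄)² + (1/2)(v − v̄)² + (1/2)‖x − x̄‖₂². Suppose (v*, x*) ∈ D is a stationary point of h (i.e., ∇h(v*, x*) = 0) with s(v*, x*) > t̄, and set t* = s(v*, x*). Then (t*, v*, x*) minimizes (1/2)(t − t̄)² + (1/2)(v − v̄)² + (1/2)‖x − x̄‖₂² over all (t, v, x) ∈ ℝ × D with s(v, x) ≤ t. -/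
open Finset

/-!
Split the substituted objective as `h = ½ (s - t̄)² + g`, with the convex
`g (v, x) = ½ (v - v̄)² + ½ ‖x - x̄‖²`. For a feasible `(t, q)` and `p = (v*, x*)`, since `t ≥ s q` and `s p ≥ t̄`,
`½ (t - t̄)² ≥ ½ (s p - t̄)² + (s p - t̄) (s q - s p) ≥ ½ (s p - t̄)² + (s p - t̄) s'(p) (q - p)`
by the gradient inequality for `s`; adding the gradient inequality `g q ≥ g p + g'(p) (q - p)`,
the first-order terms add up to `h'(p) (q - p) = 0`.
-/

theorem ConvexOn.add_apply_sub_le_of_hasFDerivAt {E : Type*} [NormedAddCommGroup E]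
    [NormedSpace ℝ E] {D : Set E} {f : E → ℝ} {f' : E →L[ℝ] ℝ} {x y : E}
    (hf : ConvexOn ℝ D f) (hx : x ∈ D) (hy : y ∈ D) (hf' : HasFDerivAt f f' x) :
    f x + f' (y - x) ≤ f y := by
  set ℓ : ℝ →ᵃ[ℝ] E := AffineMap.lineMap x y
  have hconv : ConvexOn ℝ (Set.Icc 0 1) (f ∘ ℓ) :=
    (hf.comp_affineMap ℓ).subset (fun τ hτ => hf.1.lineMap_mem hx hy hτ) (convex_Icc 0 1)
  have hderiv : HasDerivAt (f ∘ ℓ) (f' (y - x)) 0 :=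
    (by simpa [ℓ] using hf' : HasFDerivAt f f' (ℓ 0)).comp_hasDerivAt 0
      AffineMap.hasDerivAt_lineMap
  have hslope := hconv.le_slope_of_hasDerivAt (by simp) (by simp) one_pos hderiv
  simp only [slope_def_field, Function.comp_apply, ℓ, AffineMap.lineMap_apply_one,
    AffineMap.lineMap_apply_zero, sub_zero, div_one] at hslope
  linarith

theorem ConvexOn.fun_sum {𝕜 E β ι : Type*} [Semiring 𝕜] [PartialOrder 𝕜] [AddCommMonoid E]
    [AddCommMonoid β] [PartialOrder β] [IsOrderedAddMonoid β] [SMul 𝕜 E] [Module 𝕜 β]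
    {D : Set E} (hD : Convex 𝕜 D) {t : Finset ι} {f : ι → E → β}
    (hf : ∀ i ∈ t, ConvexOn 𝕜 D (f i)) : ConvexOn 𝕜 D fun x => ∑ i ∈ t, f i x := by
  simpa only [Finset.sum_fn] using
    Finset.sum_induction f (ConvexOn 𝕜 D) (fun _ _ => ConvexOn.add) (convexOn_const (0 : β) hD) hf

theorem convexOn_sq_sub (c : ℝ) : ConvexOn ℝ Set.univ fun x : ℝ => (x - c) ^ 2 := by
  simpa [Function.comp_def, sub_eq_neg_add] using
    (even_two.convexOn_pow (𝕜 := ℝ)).translate_right (-c)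

theorem convexOn_half_sq_sub_add_half_sum_sq_sub {n : ℕ} (vb : ℝ) (xb : Fin n → ℝ) :
    ConvexOn ℝ Set.univ fun q : ℝ × (Fin n → ℝ) =>
      1 / 2 * (q.1 - vb) ^ 2 + 1 / 2 * ∑ i, (q.2 i - xb i) ^ 2 := by
  have hfst := (convexOn_sq_sub vb).comp_linearMap (LinearMap.fst ℝ ℝ (Fin n → ℝ))
  have hsnd := ConvexOn.fun_sum convex_univ (t := Finset.univ) fun i _ =>
    (convexOn_sq_sub (xb i)).comp_linearMap
      ((LinearMap.proj i).comp (LinearMap.snd ℝ ℝ (Fin n → ℝ)))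
  exact (hfst.smul (by norm_num : (0 : ℝ) ≤ 1 / 2)).add (hsnd.smul (by norm_num : (0 : ℝ) ≤ 1 / 2))

theorem isMinOn_of_fderiv_half_sq_sub_add_eq_zero {E : Type*} [NormedAddCommGroup E]
    [NormedSpace ℝ E] {D : Set E} {s g : E → ℝ} {c : ℝ} {p : E}
    (hs : ConvexOn ℝ D s) (hg : ConvexOn ℝ D g) (hp : p ∈ D)
    (hsp : DifferentiableAt ℝ s p) (hgp : DifferentiableAt ℝ g p) (hc : c ≤ s p)
    (hstat : fderiv ℝ (fun q => 1 / 2 * (s q - c) ^ 2 + g q) p = 0) :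
    IsMinOn (fun r : ℝ × E => 1 / 2 * (r.1 - c) ^ 2 + g r.2) {r | r.2 ∈ D ∧ s r.2 ≤ r.1}
      (s p, p) := by
  rintro ⟨t, q⟩ ⟨hq, hst⟩
  have hderiv : HasFDerivAt (fun q => 1 / 2 * (s q - c) ^ 2 + g q)
      ((s p - c) • fderiv ℝ s p + fderiv ℝ g p) p := by
    refine ((((hsp.hasFDerivAt.sub_const c).pow 2).const_mul (1 / 2)).fun_add
      hgp.hasFDerivAt).congr_fderiv ?_
    ext v
    simp only [one_div, Nat.add_one_sub_one, pow_one, nsmul_eq_mul, Nat.cast_ofNat,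
      add_apply, smul_apply, smul_eq_mul, add_left_inj]
    ring
  have hzero : (s p - c) * fderiv ℝ s p (q - p) + fderiv ℝ g p (q - p) = 0 := by
    simpa only [hderiv.fderiv, add_apply, smul_apply,
      smul_eq_mul, zero_apply] using congr($hstat (q - p))
  have hs_grad := hs.add_apply_sub_le_of_hasFDerivAt hp hq hsp.hasFDerivAt
  have hg_grad := hg.add_apply_sub_le_of_hasFDerivAt hp hq hgp.hasFDerivAt
  have hmul : (s p - c) * fderiv ℝ s p (q - p) ≤ (s p - c) * (t - s p) :=
    mul_le_mul_of_nonneg_left (by linarith) (sub_nonneg.2 hc)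
  show 1 / 2 * (s p - c) ^ 2 + g p ≤ 1 / 2 * (t - c) ^ 2 + g q
  nlinarith [sq_nonneg (t - s p)]

theorem stmt18_general {n : ℕ} (D : Set (ℝ × (Fin n → ℝ))) (hD : IsOpen D)
    (s : ℝ × (Fin n → ℝ) → ℝ) (hs : ConvexOn ℝ D s)
    (hdiff : DifferentiableOn ℝ s D)
    (tb vb : ℝ) (xb : Fin n → ℝ)
    (p : ℝ × (Fin n → ℝ)) (hp : p ∈ D)
    (hstat : fderiv ℝ (fun q : ℝ × (Fin n → ℝ) =>
        (1 / 2) * (s q - tb) ^ 2 + (1 / 2) * (q.1 - vb) ^ 2 +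
          (1 / 2) * ∑ i, (q.2 i - xb i) ^ 2) p = 0)
    (hgt : s p > tb) :
    ∀ (t : ℝ) (q : ℝ × (Fin n → ℝ)), q ∈ D → s q ≤ t →
      (1 / 2) * (s p - tb) ^ 2 + (1 / 2) * (p.1 - vb) ^ 2 +
          (1 / 2) * ∑ i, (p.2 i - xb i) ^ 2 ≤
      (1 / 2) * (t - tb) ^ 2 + (1 / 2) * (q.1 - vb) ^ 2 +
          (1 / 2) * ∑ i, (q.2 i - xb i) ^ 2 := by
  intro t q hq hst
  have hg := (convexOn_half_sq_sub_add_half_sum_sq_sub vb xb).subset (Set.subset_univ D) hs.1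
  have hmin := isMinOn_of_fderiv_half_sq_sub_add_eq_zero hs hg hp
    (hdiff.differentiableAt (hD.mem_nhds hp)) (by fun_prop) hgt.le
    (by simpa only [add_assoc] using hstat)
  simpa only [add_assoc] using isMinOn_iff.mp hmin (t, q) ⟨hq, hst⟩

/-- Let `D ⊆ ℝ × ℝⁿ` be an open convex set, `s : D → ℝ` convex and
differentiable on `D`, and fix `(tb, vb, xb)`. Define
`h(v, x) = (1/2)(s(v,x) − tb)² + (1/2)(v − vb)² + (1/2)‖x − xb‖₂²`.
If `(v*, x*) ∈ D` is a stationary point of `h` with `s(v*, x*) > tb`, then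
`(s(v*, x*), v*, x*)` minimizes
`(1/2)(t − tb)² + (1/2)(v − vb)² + (1/2)‖x − xb‖₂²`
over all `(t, v, x) ∈ ℝ × D` with `s(v, x) ≤ t`. -/
theorem stmt18 {n : ℕ} (D : Set (ℝ × (Fin n → ℝ))) (hD : IsOpen D)
    (hDconv : Convex ℝ D)
    (s : ℝ × (Fin n → ℝ) → ℝ) (hs : ConvexOn ℝ D s)
    (hdiff : DifferentiableOn ℝ s D)
    (tb vb : ℝ) (xb : Fin n → ℝ)
    (p : ℝ × (Fin n → ℝ)) (hp : p ∈ D)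
    (hstat : fderiv ℝ (fun q : ℝ × (Fin n → ℝ) =>
        (1 / 2) * (s q - tb) ^ 2 + (1 / 2) * (q.1 - vb) ^ 2 +
          (1 / 2) * ∑ i, (q.2 i - xb i) ^ 2) p = 0)
    (hgt : s p > tb) :
    ∀ (t : ℝ) (q : ℝ × (Fin n → ℝ)), q ∈ D → s q ≤ t →
      (1 / 2) * (s p - tb) ^ 2 + (1 / 2) * (p.1 - vb) ^ 2 +
          (1 / 2) * ∑ i, (p.2 i - xb i) ^ 2 ≤
      (1 / 2) * (t - tb) ^ 2 + (1 / 2) * (q.1 - vb) ^ 2 +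
          (1 / 2) * ∑ i, (q.2 i - xb i) ^ 2 :=
  stmt18_general D hD s hs hdiff tb vb xb p hp hstat hgt
end
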